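/- arXiv:1603.04460 — 4 statements merged into one kernel-verified Lean document; each statement's English description precedes it below -/
import Mathlib

section
/- Let 1 ≤ p < ∞ and 1 ≤ r ≤ ∞. If F : [0,+∞) → [0,+∞) is locally absolutely continuous with F ∈ L^p([0,+∞)) ∩ L^∞([0,+∞)), and G₁, G₂ : [0,+∞) → ℝ satisfy G₁ ∈ L¹([0,+∞)), G₂ ∈ L^r([0,+∞)) and (d/dt)F(t) ≤ G₁(t) + G₂(t) for almost every t ∈ [0,+∞), then lim_{t→+∞} F(t) = 0. -/
open MeasureTheory Filter Topology Set RealInnerProductSpace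
open scoped ENNReal NNReal

noncomputable section

variable {H : Type*} [NormedAddCommGroup H] [InnerProductSpace ℝ H] [CompleteSpace H]

/-- The convex subdifferential of an extended-real-valued function. -/
def subdiff (Φ : H → EReal) (x : H) : Set H :=
  {p : H | Φ x ≠ ⊤ ∧ ∀ y : H, Φ x + (⟪p, y - x⟫ : EReal) ≤ Φ y}

/-- The normal cone to a set `C` at `x`. -/
def normalCone (C : Set H) (x : H) : Set H :=
  {p : H | x ∈ C ∧ ∀ y ∈ C, ⟪p, y - x⟫ ≤ 0}

/-- A proper extended-real-valued function: not identically `+∞` and never `-∞`. -/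
def ProperFn (Φ : H → EReal) : Prop := (∃ x, Φ x ≠ ⊤) ∧ ∀ x, Φ x ≠ ⊥

/-- Convexity for extended-real-valued functions. -/
def EConvexOn (Φ : H → EReal) : Prop :=
  ∀ x y : H, ∀ a b : ℝ, 0 ≤ a → 0 ≤ b → a + b = 1 →
    Φ (a • x + b • y) ≤ (a : EReal) * Φ x + (b : EReal) * Φ y

/-- Local absolute continuity on `[0, +∞)`: on every interval `[0, b]` the function is an
indefinite integral of an integrable function. -/
def LocAC {E : Type*} [NormedAddCommGroup E] [NormedSpace ℝ E] (f : ℝ → E) : Prop :=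
  ∀ b : ℝ, 0 < b → ∃ g : ℝ → E, IntegrableOn g (Icc (0:ℝ) b) ∧
    ∀ t ∈ Icc (0:ℝ) b, f t = f 0 + ∫ s in (0:ℝ)..t, g s

/-- The Fenchel conjugate of a real-valued function, with values in `EReal`. -/
def fenchelConj (Ψ : H → ℝ) (p : H) : EReal := ⨆ w : H, ((⟪p, w⟫ - Ψ w : ℝ) : EReal)

/-- The support function of a set, with values in `EReal`. -/
def suppFn (C : Set H) (p : H) : EReal := ⨆ w ∈ C, (⟪p, w⟫ : EReal)

open Classical in
/-- Conversion from `EReal` to `ℝ≥0∞` (sending `⊤` to `⊤` and negative values to `0`). -/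
def erealToENNReal (a : EReal) : ℝ≥0∞ := if a = ⊤ then ⊤ else ENNReal.ofReal a.toReal

/-- Condition (H): for every `p` in the range of the normal cone of `argmin Ψ = Ψ⁻¹(0)`,
`∫₀^∞ β(t) [Ψ*(p/β(t)) − σ_{argmin Ψ}(p/β(t))] dt < +∞`. -/
def CondH (Ψ : H → ℝ) (β : ℝ → ℝ) : Prop :=
  ∀ p : H, (∃ z : H, p ∈ normalCone (Ψ ⁻¹' {0}) z) →
    ∫⁻ t in Ici (0:ℝ), ENNReal.ofReal (β t) *
      erealToENNReal (fenchelConj Ψ ((β t)⁻¹ • p) - suppFn (Ψ ⁻¹' {0}) ((β t)⁻¹ • p)) < ⊤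

open Classical in
/-- The indicator function of a set, with values in `EReal`. -/
def eIndicator (C : Set H) (w : H) : EReal := if w ∈ C then 0 else ⊤

/-- Condition (H̃): the subdifferential sum formula
`∂(Φ + Θ + δ_{argmin Ψ}) = ∂Φ + ∇Θ + N_{argmin Ψ}`. -/
def CondHtilde (Φ : H → EReal) (Θ Ψ : H → ℝ) (Θ' : H → H) : Prop :=
  ∀ z : H, subdiff (fun y => Φ y + (Θ y : EReal) + eIndicator (Ψ ⁻¹' {0}) y) z
    = {w : H | ∃ p ∈ subdiff Φ z, ∃ q ∈ normalCone (Ψ ⁻¹' {0}) z, w = p + Θ' z + q}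

/-- The set `S` of optimal solutions of `inf_{x ∈ argmin Ψ} (Φ(x) + Θ(x))`. -/
def solSet (Φ : H → EReal) (Θ Ψ : H → ℝ) : Set H :=
  {z : H | z ∈ Ψ ⁻¹' {0} ∧ Φ z ≠ ⊤ ∧
    ∀ y ∈ Ψ ⁻¹' {0}, Φ z + (Θ z : EReal) ≤ Φ y + (Θ y : EReal)}

/-- The right-hand side `f(t,w)` of the first-order reformulation of the Levenberg–Marquardt
dynamical system, written with `μ(t) = λ(t)⁻¹`, resolvent family `J` and Yosida approximation
`(∂Φ)_{μ(t)}(w) = λ(t) (w − J_{μ(t)} w)`; `mud` is the derivative of `μ`. -/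
def LMfield {H : Type*} [NormedAddCommGroup H] [InnerProductSpace ℝ H]
    (Θ' Ψ' : H → H) (J : ℝ → H → H) (lam β mud : ℝ → ℝ) (t : ℝ) (w : H) : H :=
  (mud t - (lam t)⁻¹) • ((lam t) • (w - J (lam t)⁻¹ w))
    - (lam t)⁻¹ • Θ' (J (lam t)⁻¹ w) - (β t * (lam t)⁻¹) • Ψ' (J (lam t)⁻¹ w)

section Aux

open MeasureTheory Filter Topology Set Metric

private lemma tail_small {f : ℝ → ℝ} (hf : IntegrableOn f (Ici (0:ℝ)))
    (hf0 : ∀ x, 0 ≤ f x) {η : ℝ} (hη : 0 < η) :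
    ∃ T : ℝ, 0 ≤ T ∧ ∫ x in Ici T, f x ≤ η := by
  have hU : (⋃ n : ℕ, Ico (0:ℝ) (n:ℝ)) = Ici (0:ℝ) := by
    ext x
    simp only [mem_iUnion, mem_Ico, mem_Ici]
    constructor
    · rintro ⟨n, h, _⟩; exact h
    · intro hx
      obtain ⟨n, hn⟩ := exists_nat_gt x
      exact ⟨n, hx, hn⟩
  have hmono : Monotone fun n : ℕ => Ico (0:ℝ) (n:ℝ) := fun m n h =>
    Ico_subset_Ico le_rfl (by exact_mod_cast h)
  have htend := tendsto_setIntegral_of_monotone (fun n : ℕ => measurableSet_Ico) hmono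
    (by rw [hU]; exact hf)
  rw [hU] at htend
  obtain ⟨N, hN⟩ := (Metric.tendsto_atTop.mp htend) η hη
  have hNd := hN N le_rfl
  rw [Real.dist_eq] at hNd
  have hsplit : ∫ x in Ici (0:ℝ), f x
      = (∫ x in Ico (0:ℝ) (N:ℝ), f x) + ∫ x in Ici (N:ℝ), f x := by
    rw [← setIntegral_union (by
        refine disjoint_left.mpr fun x hx hx' => ?_
        exact absurd hx' (not_le.mpr hx.2)) measurableSet_Ici
      (hf.mono_set (Ico_subset_Ici_self)) (hf.mono_set (Ici_subset_Ici.mpr (Nat.cast_nonneg N))),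
      Ico_union_Ici_eq_Ici (Nat.cast_nonneg N)]
  refine ⟨(N:ℝ), Nat.cast_nonneg N, ?_⟩
  have habs := abs_lt.mp hNd
  linarith [habs.1, habs.2]

private lemma ftc_ineq {F F' K : ℝ → ℝ} (hF_ac : LocAC F)
    (hF' : ∀ᵐ t ∂(volume.restrict (Ici (0:ℝ))), HasDerivAt F (F' t) t)
    (hineq : ∀ᵐ t ∂(volume.restrict (Ici (0:ℝ))), F' t ≤ K t)
    (hK : ∀ b : ℝ, 0 < b → IntegrableOn K (Icc (0:ℝ) b))
    {s t : ℝ} (hs : 0 ≤ s) (hst : s ≤ t) :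
    F t - F s ≤ ∫ x in s..t, K x := by
  set b := t + 1 with hbdef
  have hb0 : 0 < b := by simp only [hbdef]; linarith
  obtain ⟨g, hg_int, hg_repr⟩ := hF_ac b hb0
  have hgI : ∀ u v : ℝ, 0 ≤ u → v ≤ b → u ≤ v → IntervalIntegrable g volume u v := by
    intro u v hu hv huv
    apply IntegrableOn.intervalIntegrable
    rw [uIcc_of_le huv]
    exact hg_int.mono_set (Icc_subset_Icc hu hv)
  have h1 : ∀ᵐ x : ℝ, x ∈ Ici (0:ℝ) → HasDerivAt F (F' x) x :=
    (ae_restrict_iff' measurableSet_Ici).mp hF'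
  have h2 : ∀ᵐ x : ℝ, x ∈ Ici (0:ℝ) → F' x ≤ K x :=
    (ae_restrict_iff' measurableSet_Ici).mp hineq
  set gg : ℝ → ℝ := (Icc (0:ℝ) b).indicator g with hggdef
  have hgg_int : Integrable gg := hg_int.integrable_indicator measurableSet_Icc
  have h3 := IsUnifLocDoublingMeasure.ae_tendsto_average (μ := (volume : Measure ℝ))
    hgg_int.locallyIntegrable 1
  have hae : ∀ᵐ x : ℝ, x ∈ Ioo (0:ℝ) b → g x ≤ K x := by
    filter_upwards [h1, h2, h3] with x hx1 hx2 hx3 hmem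
    have hd : HasDerivAt F (F' x) x := hx1 (le_of_lt hmem.1)
    have hball : ∀ᶠ r in (𝓝[>] (0:ℝ)), x ∈ Metric.closedBall x (1 * r) := by
      filter_upwards [self_mem_nhdsWithin] with r hr
      simp [Metric.mem_closedBall, le_of_lt (mem_Ioi.mp hr)]
    have havg : Tendsto (fun r : ℝ => ⨍ y in Metric.closedBall x r, gg y) (𝓝[>] (0:ℝ))
        (𝓝 (gg x)) := hx3 (fun _ => x) id tendsto_id hball
    have hev : ∀ᶠ r in 𝓝[>] (0:ℝ),
        (⨍ y in Metric.closedBall x r, gg y) = (2*r)⁻¹ * (F (x+r) - F (x-r)) := by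
      have hsmall : Ioo (0:ℝ) (min x (b - x)) ∈ 𝓝[>] (0:ℝ) :=
        Ioo_mem_nhdsGT_of_mem ⟨le_rfl, lt_min hmem.1 (by linarith [hmem.2])⟩
      filter_upwards [hsmall] with r hr
      have hr0 : 0 < r := hr.1
      have hrx : r < x := lt_of_lt_of_le hr.2 (min_le_left _ _)
      have hrb : r < b - x := lt_of_lt_of_le hr.2 (min_le_right _ _)
      have h1r : 0 ≤ x - r := by linarith
      have h2r : x + r ≤ b := by linarith
      have hsub : Icc (x - r) (x + r) ⊆ Icc (0:ℝ) b := Icc_subset_Icc h1r h2r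
      have hmem1 : x - r ∈ Icc (0:ℝ) b := ⟨h1r, by linarith⟩
      have hmem2 : x + r ∈ Icc (0:ℝ) b := ⟨by linarith, h2r⟩
      have hint1 : IntervalIntegrable g volume 0 (x - r) := hgI _ _ le_rfl hmem1.2 h1r
      have hint2 : IntervalIntegrable g volume 0 (x + r) := hgI _ _ le_rfl h2r (by linarith)
      have key : F (x + r) - F (x - r) = ∫ y in Icc (x - r) (x + r), g y := by
        rw [hg_repr _ hmem2, hg_repr _ hmem1,
          show (F 0 + ∫ u in (0:ℝ)..(x+r), g u) - (F 0 + ∫ u in (0:ℝ)..(x-r), g u)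
            = (∫ u in (0:ℝ)..(x+r), g u) - ∫ u in (0:ℝ)..(x-r), g u from by ring,
          intervalIntegral.integral_interval_sub_left hint2 hint1,
          intervalIntegral.integral_of_le (by linarith : x - r ≤ x + r),
          ← integral_Icc_eq_integral_Ioc]
      rw [setAverage_eq, Real.closedBall_eq_Icc, setIntegral_indicator measurableSet_Icc,
        inter_eq_self_of_subset_left hsub, ← key, measureReal_def, Real.volume_Icc, smul_eq_mul]
      congr 2
      rw [show x + r - (x - r) = 2 * r from by ring, ENNReal.toReal_ofReal (by linarith)]
    have hrw : Tendsto (fun r : ℝ => (2*r)⁻¹ * (F (x+r) - F (x-r))) (𝓝[>] (0:ℝ))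
        (𝓝 (gg x)) := havg.congr' hev
    have hslope := hasDerivAt_iff_tendsto_slope.mp hd
    have hcomp1 : Tendsto (fun r : ℝ => x + r) (𝓝[>] (0:ℝ)) (𝓝[≠] x) := by
      rw [tendsto_nhdsWithin_iff]
      constructor
      · have h : Tendsto (fun r : ℝ => x + r) (𝓝 (0:ℝ)) (𝓝 (x + 0)) :=
          (continuous_const.add continuous_id).tendsto 0
        simpa using h.mono_left nhdsWithin_le_nhds
      · filter_upwards [self_mem_nhdsWithin] with r hr
        simp only [mem_compl_iff, mem_singleton_iff]
        intro h
        have hr' : 0 < r := hr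
        have : r = 0 := by linarith
        exact absurd this (ne_of_gt hr')
    have hcomp2 : Tendsto (fun r : ℝ => x - r) (𝓝[>] (0:ℝ)) (𝓝[≠] x) := by
      rw [tendsto_nhdsWithin_iff]
      constructor
      · have h : Tendsto (fun r : ℝ => x - r) (𝓝 (0:ℝ)) (𝓝 (x - 0)) :=
          (continuous_const.sub continuous_id).tendsto 0
        simpa using h.mono_left nhdsWithin_le_nhds
      · filter_upwards [self_mem_nhdsWithin] with r hr
        simp only [mem_compl_iff, mem_singleton_iff]
        intro h
        have hr' : 0 < r := hr
        have : r = 0 := by linarith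
        exact absurd this (ne_of_gt hr')
    have hp' : Tendsto (fun r : ℝ => slope F x (x + r)) (𝓝[>] (0:ℝ)) (𝓝 (F' x)) :=
      hslope.comp hcomp1
    have hm' : Tendsto (fun r : ℝ => slope F x (x - r)) (𝓝[>] (0:ℝ)) (𝓝 (F' x)) :=
      hslope.comp hcomp2
    have hsum := (hp'.add hm').div_const 2
    have heq : ∀ᶠ r in 𝓝[>] (0:ℝ),
        (slope F x (x + r) + slope F x (x - r)) / 2 = (2*r)⁻¹ * (F (x+r) - F (x-r)) := by
      filter_upwards [self_mem_nhdsWithin] with r hr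
      have hr0 : r ≠ 0 := ne_of_gt hr
      rw [slope_def_field, slope_def_field,
        show x + r - x = r from by ring, show x - r - x = -r from by ring,
        div_neg, ← sub_eq_add_neg, div_sub_div_same]
      ring
    have hlim2 : Tendsto (fun r : ℝ => (2*r)⁻¹ * (F (x+r) - F (x-r))) (𝓝[>] (0:ℝ))
        (𝓝 ((F' x + F' x) / 2)) := hsum.congr' heq
    have h22 : (F' x + F' x) / 2 = F' x := by ring
    rw [h22] at hlim2
    have hgx : gg x = F' x := tendsto_nhds_unique hrw hlim2
    have hggx : gg x = g x := indicator_of_mem (Ioo_subset_Icc_self hmem) g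
    calc g x = F' x := by rw [← hggx, hgx]
    _ ≤ K x := hx2 (le_of_lt hmem.1)
  have hts : t ∈ Icc (0:ℝ) b := ⟨le_trans hs hst, by simp only [hbdef]; linarith⟩
  have hss : s ∈ Icc (0:ℝ) b := ⟨hs, by simp only [hbdef]; linarith⟩
  have hFt : F t - F s = ∫ x in s..t, g x := by
    rw [hg_repr t hts, hg_repr s hss,
      ← intervalIntegral.integral_interval_sub_left (hgI 0 t le_rfl hts.2 hts.1)
        (hgI 0 s le_rfl hss.2 hss.1)]
    ring
  have hKi : IntervalIntegrable K volume s t := by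
    apply IntegrableOn.intervalIntegrable
    rw [uIcc_of_le hst]
    exact (hK b hb0).mono_set (Icc_subset_Icc hs hts.2)
  have hgi : IntervalIntegrable g volume s t := hgI s t hs hts.2 hst
  rw [hFt]
  refine intervalIntegral.integral_mono_ae_restrict hst hgi hKi ?_
  have h0 : ∀ᵐ x : ℝ, x ≠ (0:ℝ) := by
    rw [ae_iff]
    have : {x : ℝ | ¬x ≠ 0} = {(0:ℝ)} := by ext y; simp
    rw [this]
    exact measure_singleton 0
  filter_upwards [ae_restrict_of_ae hae, ae_restrict_of_ae h0,
    ae_restrict_mem measurableSet_Icc] with x hx1 hx2 hx3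
  exact hx1 ⟨lt_of_le_of_ne (le_trans hs hx3.1) (Ne.symm hx2),
    lt_of_le_of_lt hx3.2 (by simp only [hbdef]; linarith)⟩

end Aux

theorem stmt_0 (p r : ℝ≥0∞) (hp : 1 ≤ p) (hp' : p ≠ ⊤) (hr : 1 ≤ r)
    (F G₁ G₂ F' : ℝ → ℝ)
    (hF_ac : LocAC F) (hF_nonneg : ∀ t : ℝ, 0 ≤ t → 0 ≤ F t)
    (hFp : MemLp F p (volume.restrict (Ici (0:ℝ))))
    (hFtop : MemLp F ⊤ (volume.restrict (Ici (0:ℝ))))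
    (hG₁ : IntegrableOn G₁ (Ici (0:ℝ)))
    (hG₂ : MemLp G₂ r (volume.restrict (Ici (0:ℝ))))
    (hF' : ∀ᵐ t ∂(volume.restrict (Ici (0:ℝ))), HasDerivAt F (F' t) t)
    (hineq : ∀ᵐ t ∂(volume.restrict (Ici (0:ℝ))), F' t ≤ G₁ t + G₂ t) :
    Tendsto F atTop (𝓝 0) := by
  -- Step 1: a dominating function C + H with H integrable on [0,∞)
  obtain ⟨C, H, hC0, hH0, hHint, hbound⟩ :
      ∃ (C : ℝ) (H : ℝ → ℝ), 0 ≤ C ∧ (∀ x, 0 ≤ H x) ∧ IntegrableOn H (Ici (0:ℝ)) ∧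
        ∀ᵐ x ∂(volume.restrict (Ici (0:ℝ))), G₁ x + G₂ x ≤ C + H x := by
    by_cases hrt : r = ⊤
    · refine ⟨(eLpNorm G₂ ⊤ (volume.restrict (Ici (0:ℝ)))).toReal, fun x => |G₁ x|,
        ENNReal.toReal_nonneg, fun x => abs_nonneg _, hG₁.abs, ?_⟩
      have hfin : eLpNorm G₂ ⊤ (volume.restrict (Ici (0:ℝ))) ≠ ⊤ := by
        have h := hG₂.2.ne
        rwa [hrt] at h
      filter_upwards [ae_le_eLpNormEssSup (f := G₂) (μ := volume.restrict (Ici (0:ℝ)))]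
        with x hx
      have hb2 : |G₂ x| ≤ (eLpNorm G₂ ⊤ (volume.restrict (Ici (0:ℝ)))).toReal := by
        rw [eLpNorm_exponent_top]
        have h1 : ((‖G₂ x‖₊ : ℝ≥0∞)).toReal ≤
            (eLpNormEssSup G₂ (volume.restrict (Ici (0:ℝ)))).toReal := by
          apply ENNReal.toReal_mono _ hx
          rwa [eLpNorm_exponent_top] at hfin
        simpa [Real.norm_eq_abs] using h1
      have hg1 : G₁ x ≤ |G₁ x| := le_abs_self _
      have hg2 : G₂ x ≤ |G₂ x| := le_abs_self _
      linarith
    · have hr0 : r ≠ 0 := (lt_of_lt_of_le zero_lt_one hr).ne'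
      have hint := hG₂.integrable_norm_rpow hr0 hrt
      have hq1 : (1:ℝ) ≤ r.toReal := by
        rw [show (1:ℝ) = (1:ℝ≥0∞).toReal from by simp]
        exact ENNReal.toReal_mono hrt hr
      refine ⟨1, fun x => |G₁ x| + |G₂ x| ^ r.toReal, zero_le_one,
        fun x => add_nonneg (abs_nonneg _) (Real.rpow_nonneg (abs_nonneg _) _), ?_, ?_⟩
      · have h9 : IntegrableOn (fun x => |G₂ x| ^ r.toReal) (Ici (0:ℝ)) := by
          exact (by simpa [Real.norm_eq_abs] using hint : Integrable (fun x => |G₂ x| ^ r.toReal) (volume.restrict (Ici (0:ℝ))))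
        exact Integrable.add hG₁.abs h9
      · refine Eventually.of_forall fun x => ?_
        show G₁ x + G₂ x ≤ 1 + (|G₁ x| + |G₂ x| ^ r.toReal)
        have h2 : G₂ x ≤ 1 + |G₂ x| ^ r.toReal := by
          rcases le_or_gt (|G₂ x|) 1 with h | h
          · have h3 := le_abs_self (G₂ x)
            have h4 : (0:ℝ) ≤ |G₂ x| ^ r.toReal := Real.rpow_nonneg (abs_nonneg _) _
            linarith
          · have h5 : |G₂ x| ^ (1:ℝ) ≤ |G₂ x| ^ r.toReal :=
              Real.rpow_le_rpow_of_exponent_le h.le hq1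
            rw [Real.rpow_one] at h5
            have h3 := le_abs_self (G₂ x)
            linarith
        have h1 := le_abs_self (G₁ x)
        linarith
  -- Step 2: fundamental inequality
  have hineq' : ∀ᵐ t ∂(volume.restrict (Ici (0:ℝ))), F' t ≤ C + H t := by
    filter_upwards [hineq, hbound] with x h1 h2
    linarith
  have hKloc : ∀ b : ℝ, 0 < b → IntegrableOn (fun x => C + H x) (Icc (0:ℝ) b) := by
    intro b hb
    refine Integrable.add ?_ (hHint.mono_set Icc_subset_Ici_self)
    refine (integrableOn_const_iff (C := C)).mpr (Or.inr ?_)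
    rw [Real.volume_Icc]
    exact ENNReal.ofReal_lt_top
  have key : ∀ u v : ℝ, 0 ≤ u → u ≤ v → F v - F u ≤ C * (v - u) + ∫ x in u..v, H x := by
    intro u v hu huv
    have h := ftc_ineq hF_ac hF' hineq' hKloc hu huv
    have hHi : IntervalIntegrable H volume u v := by
      apply IntegrableOn.intervalIntegrable
      rw [uIcc_of_le huv]
      exact hHint.mono_set fun y hy => le_trans hu hy.1
    calc F v - F u ≤ ∫ x in u..v, (C + H x) := h
    _ = (∫ _x in u..v, C) + ∫ x in u..v, H x :=
        intervalIntegral.integral_add intervalIntegrable_const hHi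
    _ = C * (v - u) + ∫ x in u..v, H x := by
        rw [intervalIntegral.integral_const, smul_eq_mul]; ring
  -- Step 3: contradiction setup
  by_contra hcon
  rw [Metric.tendsto_atTop] at hcon
  push_neg at hcon
  obtain ⟨ε, hε, hfreq⟩ := hcon
  have hp0 : p ≠ 0 := (lt_of_lt_of_le zero_lt_one hp).ne'
  have hq0 : 0 < p.toReal := ENNReal.toReal_pos hp0 hp'
  have hΦint : IntegrableOn (fun x => |F x| ^ p.toReal) (Ici (0:ℝ)) := by
    have h := hFp.integrable_norm_rpow hp0 hp'
    exact (by simpa [Real.norm_eq_abs] using h : Integrable (fun x => |F x| ^ p.toReal) (volume.restrict (Ici (0:ℝ))))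
  set δ := min 1 (ε / (4 * (C + 1))) with hδdef
  have hC1 : (0:ℝ) < C + 1 := by linarith
  have hδ0 : 0 < δ := lt_min one_pos (by positivity)
  have hδ1 : δ ≤ 1 := min_le_left _ _
  have hCδ : C * δ ≤ ε / 4 := by
    have h1 : δ ≤ ε / (4 * (C + 1)) := min_le_right _ _
    have h2 : C * δ ≤ C * (ε / (4 * (C + 1))) := mul_le_mul_of_nonneg_left h1 hC0
    have h4 : (C + 1) * (ε / (4 * (C + 1))) = ε / 4 := by
      field_simp
    have h5 : 0 ≤ ε / (4 * (C + 1)) := by positivity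
    nlinarith
  obtain ⟨T₀, hT₀0, hT₀⟩ := tail_small hHint hH0 (show (0:ℝ) < ε/4 by linarith)
  have hpow : 0 < (ε/2) ^ p.toReal := Real.rpow_pos_of_pos (by linarith) _
  obtain ⟨T₁, hT₁0, hT₁⟩ := tail_small hΦint
    (fun x => Real.rpow_nonneg (abs_nonneg _) _)
    (show (0:ℝ) < (ε/2) ^ p.toReal * δ / 2 by positivity)
  obtain ⟨t, ht, htF⟩ := hfreq (max T₀ T₁ + 1)
  have hmax0 : 0 ≤ max T₀ T₁ := le_trans hT₀0 (le_max_left _ _)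
  have ht0 : (0:ℝ) ≤ t := by linarith
  rw [Real.dist_eq, sub_zero, abs_of_nonneg (hF_nonneg t ht0)] at htF
  have htδ : max T₀ T₁ ≤ t - δ := by linarith
  have hT₀δ : T₀ ≤ t - δ := le_trans (le_max_left _ _) htδ
  have hT₁δ : T₁ ≤ t - δ := le_trans (le_max_right _ _) htδ
  have hFs : ∀ s ∈ Icc (t - δ) t, ε/2 ≤ F s := by
    intro s hsmem
    have hs0 : 0 ≤ s := le_trans (le_trans hT₀0 hT₀δ) hsmem.1
    have hk := key s t hs0 hsmem.2
    have hHpart : ∫ x in s..t, H x ≤ ∫ x in Ici T₀, H x := by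
      rw [intervalIntegral.integral_of_le hsmem.2]
      refine setIntegral_mono_set (hHint.mono_set (Ici_subset_Ici.mpr hT₀0))
        (Eventually.of_forall fun x => hH0 x) (HasSubset.Subset.eventuallyLE ?_)
      intro y hy
      exact le_trans (le_trans hT₀δ hsmem.1) (le_of_lt hy.1)
    have hCt : C * (t - s) ≤ ε/4 := by
      have h6 : t - s ≤ δ := by have := hsmem.1; linarith
      have h7 : C * (t - s) ≤ C * δ := mul_le_mul_of_nonneg_left h6 hC0
      linarith
    linarith
  have hsub1 : Icc (t - δ) t ⊆ Ici T₁ := fun y hy => le_trans hT₁δ hy.1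
  have hΦT₁ : IntegrableOn (fun x => |F x| ^ p.toReal) (Ici T₁) :=
    hΦint.mono_set (Ici_subset_Ici.mpr hT₁0)
  have hμ : volume (Icc (t - δ) t) = ENNReal.ofReal δ := by
    rw [Real.volume_Icc]
    congr 1
    ring
  have hlow : (ε/2) ^ p.toReal * δ ≤ ∫ x in Icc (t - δ) t, |F x| ^ p.toReal := by
    have h := setIntegral_ge_of_const_le (μ := volume) (s := Icc (t - δ) t) (c := (ε/2) ^ p.toReal)
      (f := fun x => |F x| ^ p.toReal) measurableSet_Icc
      (by rw [hμ]; exact ENNReal.ofReal_ne_top)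
      (fun x hx => by
        have h1 : ε/2 ≤ F x := hFs x hx
        have h2 : F x ≤ |F x| := le_abs_self _
        exact Real.rpow_le_rpow (by linarith) (by linarith) hq0.le)
      (hΦint.mono_set fun y hy => le_trans (le_trans hT₀0 hT₀δ) hy.1)
    rw [measureReal_def, hμ, ENNReal.toReal_ofReal hδ0.le, smul_eq_mul] at h
    linarith
  have hup : ∫ x in Icc (t - δ) t, |F x| ^ p.toReal ≤ ∫ x in Ici T₁, |F x| ^ p.toReal :=
    setIntegral_mono_set hΦT₁
      (Eventually.of_forall fun x => Real.rpow_nonneg (abs_nonneg _) _)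
      (HasSubset.Subset.eventuallyLE hsub1)
  have hposδ : 0 < (ε/2) ^ p.toReal * δ := mul_pos hpow hδ0
  linarith


end
end

section
/- For every t ∈ [0,+∞) at which λ̇(t) exists and for all w₁, w₂ ∈ H, the map f satisfies ‖f(t,w₁) − f(t,w₂)‖ ≤ (1 + |λ̇(t)|/λ(t) + L_{∇Θ}/λ(t) + L_{∇Ψ} β(t)/λ(t)) ‖w₁ − w₂‖. -/
open MeasureTheory Filter Topology Set RealInnerProductSpace
open scoped ENNReal NNReal

noncomputable section

variable {H : Type*} [NormedAddCommGroup H] [InnerProductSpace ℝ H] [CompleteSpace H]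

lemma subdiff_mono' {Φ : H → EReal} (hΦprop : ProperFn Φ)
    {x y p q : H} (hp : p ∈ subdiff Φ x) (hq : q ∈ subdiff Φ y) :
    0 ≤ ⟪p - q, x - y⟫ := by
  obtain ⟨hx_top, hx⟩ := hp
  obtain ⟨hy_top, hy⟩ := hq
  have hx_bot := hΦprop.2 x
  have hy_bot := hΦprop.2 y
  have hxa : Φ x = ((Φ x).toReal : EReal) := (EReal.coe_toReal hx_top hx_bot).symm
  have hyb : Φ y = ((Φ y).toReal : EReal) := (EReal.coe_toReal hy_top hy_bot).symm
  have h1 := hx y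
  have h2 := hy x
  rw [hxa, hyb, ← EReal.coe_add, EReal.coe_le_coe_iff] at h1 h2
  have e1 : ⟪p, y - x⟫ = -⟪p, x - y⟫ := by
    rw [show y - x = -(x - y) by abel, inner_neg_right]
  have e2 : ⟪p - q, x - y⟫ = ⟪p, x - y⟫ - ⟪q, x - y⟫ := inner_sub_left _ _ _
  linarith [e1 ▸ h1]

theorem stmt_1
    (Φ : H → EReal) (Θ Ψ : H → ℝ) (Θ' Ψ' : H → H) (LΘ LΨ : ℝ≥0)
    (hΦprop : ProperFn Φ) (hΦconv : EConvexOn Φ) (hΦlsc : LowerSemicontinuous Φ)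
    (hΘconv : ConvexOn ℝ Set.univ Θ) (hΘgrad : ∀ w : H, HasGradientAt Θ (Θ' w) w)
    (hΘlip : LipschitzWith LΘ Θ')
    (hΨconv : ConvexOn ℝ Set.univ Ψ) (hΨgrad : ∀ w : H, HasGradientAt Ψ (Ψ' w) w)
    (hΨlip : LipschitzWith LΨ Ψ') (hΨnonneg : ∀ w : H, 0 ≤ Ψ w)
    (hargmin : (Ψ ⁻¹' {0} : Set H).Nonempty)
    (lam : ℝ → ℝ) (hlam_pos : ∀ t : ℝ, 0 ≤ t → 0 < lam t) (hlam_ac : LocAC lam)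
    (β : ℝ → ℝ) (hβ_nonneg : ∀ t : ℝ, 0 ≤ t → 0 ≤ β t)
    (hβ_int : ∀ b : ℝ, 0 < b → IntegrableOn β (Icc (0:ℝ) b))
    (J : ℝ → H → H)
    (hJ : ∀ γ : ℝ, 0 < γ → ∀ w : H, γ⁻¹ • (w - J γ w) ∈ subdiff Φ (J γ w))
    (t : ℝ) (ht : 0 ≤ t) (lamd : ℝ) (hlamd : HasDerivAt lam lamd t)
    (w₁ w₂ : H) :
    ‖LMfield Θ' Ψ' J lam β (fun _ => -lamd / (lam t) ^ 2) t w₁ -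
      LMfield Θ' Ψ' J lam β (fun _ => -lamd / (lam t) ^ 2) t w₂‖ ≤
      (1 + |lamd| / lam t + (LΘ : ℝ) / lam t + (LΨ : ℝ) * β t / lam t) * ‖w₁ - w₂‖ := by
  have hl : 0 < lam t := hlam_pos t ht
  have hγ : 0 < (lam t)⁻¹ := inv_pos.mpr hl
  set l := lam t with hldef
  set v₁ := J l⁻¹ w₁ with hv₁
  set v₂ := J l⁻¹ w₂ with hv₂
  have hp₁ := hJ l⁻¹ hγ w₁
  have hp₂ := hJ l⁻¹ hγ w₂
  have hmono := subdiff_mono' hΦprop hp₁ hp₂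
  rw [← hv₁, ← hv₂] at hmono
  have hinv : (l⁻¹)⁻¹ = l := inv_inv l
  rw [hinv, ← smul_sub, real_inner_smul_left] at hmono
  have key : 0 ≤ ⟪(w₁ - w₂) - (v₁ - v₂), v₁ - v₂⟫ := by
    have h := nonneg_of_mul_nonneg_right (by linarith [hmono] : (0:ℝ) ≤ l * ⟪w₁ - v₁ - (w₂ - v₂), v₁ - v₂⟫) hl
    · have : w₁ - v₁ - (w₂ - v₂) = (w₁ - w₂) - (v₁ - v₂) := by abel
      rwa [this] at h
  set u := w₁ - w₂ with hu
  set v := v₁ - v₂ with hv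
  have hiuv : ⟪u - v, v⟫ = ⟪u, v⟫ - ⟪v, v⟫ := inner_sub_left _ _ _
  have hvv : ⟪v, v⟫ = ‖v‖ ^ 2 := real_inner_self_eq_norm_sq v
  have hcs : ⟪u, v⟫ ≤ ‖u‖ * ‖v‖ := real_inner_le_norm u v
  have hnv : ‖v‖ ≤ ‖u‖ := by nlinarith [norm_nonneg v, norm_nonneg u]
  have hexp : ‖u‖ ^ 2 = ‖u - v‖ ^ 2 + 2 * ⟪u - v, v⟫ + ‖v‖ ^ 2 := by
    have := norm_add_sq_real (u - v) v
    rwa [sub_add_cancel] at this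
  have hnuv : ‖u - v‖ ≤ ‖u‖ := by nlinarith [norm_nonneg (u - v), norm_nonneg u, sq_nonneg ‖v‖]
  -- decompose the difference
  have heq : LMfield Θ' Ψ' J lam β (fun _ => -lamd / l ^ 2) t w₁ -
      LMfield Θ' Ψ' J lam β (fun _ => -lamd / l ^ 2) t w₂
      = ((-lamd / l ^ 2 - l⁻¹) * l) • (u - v) - l⁻¹ • (Θ' v₁ - Θ' v₂)
        - (β t * l⁻¹) • (Ψ' v₁ - Ψ' v₂) := by
    simp only [LMfield, ← hldef, ← hv₁, ← hv₂, hu, hv, smul_sub, smul_smul]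
    module
  rw [heq]
  have hβt : 0 ≤ β t := hβ_nonneg t ht
  have hΘb : ‖Θ' v₁ - Θ' v₂‖ ≤ (LΘ : ℝ) * ‖v‖ := by
    have := hΘlip.dist_le_mul v₁ v₂
    rwa [dist_eq_norm, dist_eq_norm] at this
  have hΨb : ‖Ψ' v₁ - Ψ' v₂‖ ≤ (LΨ : ℝ) * ‖v‖ := by
    have := hΨlip.dist_le_mul v₁ v₂
    rwa [dist_eq_norm, dist_eq_norm] at this
  have hc : |(-lamd / l ^ 2 - l⁻¹) * l| ≤ 1 + |lamd| / l := by
    have hln : l ≠ 0 := ne_of_gt hl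
    have : (-lamd / l ^ 2 - l⁻¹) * l = -(lamd / l) - 1 := by field_simp
    rw [this]
    calc |-(lamd / l) - 1| ≤ |-(lamd / l)| + |(1:ℝ)| := abs_sub _ _
      _ = |lamd| / l + 1 := by rw [abs_neg, abs_div, abs_one, abs_of_pos hl]
      _ = 1 + |lamd| / l := by ring
  calc ‖((-lamd / l ^ 2 - l⁻¹) * l) • (u - v) - l⁻¹ • (Θ' v₁ - Θ' v₂)
        - (β t * l⁻¹) • (Ψ' v₁ - Ψ' v₂)‖
      ≤ ‖((-lamd / l ^ 2 - l⁻¹) * l) • (u - v) - l⁻¹ • (Θ' v₁ - Θ' v₂)‖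
        + ‖(β t * l⁻¹) • (Ψ' v₁ - Ψ' v₂)‖ := norm_sub_le _ _
    _ ≤ ‖((-lamd / l ^ 2 - l⁻¹) * l) • (u - v)‖ + ‖l⁻¹ • (Θ' v₁ - Θ' v₂)‖
        + ‖(β t * l⁻¹) • (Ψ' v₁ - Ψ' v₂)‖ := by
        exact add_le_add (norm_sub_le _ _) le_rfl
    _ = |(-lamd / l ^ 2 - l⁻¹) * l| * ‖u - v‖ + l⁻¹ * ‖Θ' v₁ - Θ' v₂‖
        + (β t * l⁻¹) * ‖Ψ' v₁ - Ψ' v₂‖ := by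
        rw [norm_smul, norm_smul, norm_smul, Real.norm_eq_abs, Real.norm_eq_abs,
          Real.norm_eq_abs, abs_of_pos hγ, abs_of_nonneg (mul_nonneg hβt (le_of_lt hγ))]
    _ ≤ (1 + |lamd| / l) * ‖u‖ + l⁻¹ * ((LΘ : ℝ) * ‖u‖) + (β t * l⁻¹) * ((LΨ : ℝ) * ‖u‖) := by
        have h1 : |(-lamd / l ^ 2 - l⁻¹) * l| * ‖u - v‖ ≤ (1 + |lamd| / l) * ‖u‖ :=
          mul_le_mul hc hnuv (norm_nonneg _) (by positivity)
        have h2 : l⁻¹ * ‖Θ' v₁ - Θ' v₂‖ ≤ l⁻¹ * ((LΘ : ℝ) * ‖u‖) :=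
          mul_le_mul_of_nonneg_left (hΘb.trans (by
            exact mul_le_mul_of_nonneg_left hnv (NNReal.coe_nonneg _))) (le_of_lt hγ)
        have h3 : (β t * l⁻¹) * ‖Ψ' v₁ - Ψ' v₂‖ ≤ (β t * l⁻¹) * ((LΨ : ℝ) * ‖u‖) :=
          mul_le_mul_of_nonneg_left (hΨb.trans (by
            exact mul_le_mul_of_nonneg_left hnv (NNReal.coe_nonneg _)))
            (mul_nonneg hβt (le_of_lt hγ))
        linarith
    _ = (1 + |lamd| / l + (LΘ : ℝ) / l + (LΨ : ℝ) * β t / l) * ‖u‖ := by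
        field_simp

end
end

section
/- Let (x,v) be a strong global solution of the Levenberg–Marquardt dynamical system. Then (i) ⟨ẋ(t), v̇(t)⟩ ≥ 0 for almost every t ∈ [0,+∞), and (ii) the function t ↦ Φ(x(t)) is differentiable almost everywhere with (d/dt)Φ(x(t)) = ⟨ẋ(t), v(t)⟩ for almost every t ∈ [0,+∞). -/
open MeasureTheory Filter Topology Set RealInnerProductSpace
open scoped ENNReal NNReal

noncomputable section

variable {H : Type*} [NormedAddCommGroup H] [InnerProductSpace ℝ H] [CompleteSpace H]

theorem stmt_3
    (Φ : H → EReal) (Θ Ψ : H → ℝ) (Θ' Ψ' : H → H) (LΘ LΨ : ℝ≥0)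
    (hΦprop : ProperFn Φ) (hΦconv : EConvexOn Φ) (hΦlsc : LowerSemicontinuous Φ)
    (hΘconv : ConvexOn ℝ Set.univ Θ) (hΘgrad : ∀ w : H, HasGradientAt Θ (Θ' w) w)
    (hΘlip : LipschitzWith LΘ Θ')
    (hΨconv : ConvexOn ℝ Set.univ Ψ) (hΨgrad : ∀ w : H, HasGradientAt Ψ (Ψ' w) w)
    (hΨlip : LipschitzWith LΨ Ψ') (hΨnonneg : ∀ w : H, 0 ≤ Ψ w)
    (hargmin : (Ψ ⁻¹' {0} : Set H).Nonempty)
    (lam : ℝ → ℝ) (hlam_pos : ∀ t : ℝ, 0 ≤ t → 0 < lam t) (hlam_ac : LocAC lam)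
    (β : ℝ → ℝ) (hβ_pos : ∀ t : ℝ, 0 ≤ t → 0 < β t) (hβ_meas : Measurable β)
    (hβ_bdd : ∀ b : ℝ, 0 < b → ∃ M : ℝ, ∀ t ∈ Icc (0:ℝ) b, β t ≤ M)
    (x v x' v' : ℝ → H) (hx_ac : LocAC x) (hv_ac : LocAC v)
    (hx' : ∀ᵐ t ∂(volume.restrict (Ici (0:ℝ))), HasDerivAt x (x' t) t)
    (hv' : ∀ᵐ t ∂(volume.restrict (Ici (0:ℝ))), HasDerivAt v (v' t) t)
    (hvsub : ∀ t ∈ Ici (0:ℝ), v t ∈ subdiff Φ (x t))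
    (hode : ∀ᵐ t ∂(volume.restrict (Ici (0:ℝ))), lam t • x' t + v' t + v t + Θ' (x t) + β t • Ψ' (x t) = 0)
    :
    (∀ᵐ t ∂(volume.restrict (Ici (0:ℝ))), 0 ≤ ⟪x' t, v' t⟫) ∧
    (∀ᵐ t ∂(volume.restrict (Ici (0:ℝ))), HasDerivAt (fun s => (Φ (x s)).toReal) (⟪x' t, v t⟫) t) := by
  -- Notation: φ s = (Φ (x s)).toReal
  set φ : ℝ → ℝ := fun s => (Φ (x s)).toReal with hφdef
  -- Key subgradient inequality (in the reals)
  have key : ∀ s ∈ Ici (0:ℝ), ∀ t ∈ Ici (0:ℝ), ⟪v t, x s - x t⟫ ≤ φ s - φ t := by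
    intro s hs t ht
    obtain ⟨hnt_t, hineq⟩ := hvsub t ht
    obtain ⟨hnt_s, _⟩ := hvsub s hs
    have hnb_t : Φ (x t) ≠ ⊥ := hΦprop.2 _
    have hnb_s : Φ (x s) ≠ ⊥ := hΦprop.2 _
    have h := hineq (x s)
    rw [← EReal.coe_toReal hnt_t hnb_t, ← EReal.coe_toReal hnt_s hnb_s] at h
    rw [← EReal.coe_add, EReal.coe_le_coe_iff] at h
    linarith
  -- Monotonicity of the subdifferential along the trajectory
  have mono : ∀ s ∈ Ici (0:ℝ), ∀ t ∈ Ici (0:ℝ), 0 ≤ ⟪v s - v t, x s - x t⟫ := by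
    intro s hs t ht
    have h1 := key s hs t ht
    have h2 := key t ht s hs
    have e : x t - x s = -(x s - x t) := by abel
    rw [e, inner_neg_right] at h2
    rw [inner_sub_left]
    linarith
  have hmem : ∀ᵐ t ∂(volume.restrict (Ici (0:ℝ))), t ∈ Ici (0:ℝ) :=
    ae_restrict_mem measurableSet_Ici
  have hne0 : ∀ᵐ t ∂(volume.restrict (Ici (0:ℝ))), t ≠ 0 := by
    have h0 : ∀ᵐ t : ℝ ∂(volume : Measure ℝ), t ≠ 0 := by
      rw [ae_iff]
      have : {a : ℝ | ¬a ≠ 0} = {0} := by ext a; simp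
      rw [this]
      exact measure_singleton 0
    exact ae_mono Measure.restrict_le_self h0
  constructor
  · -- Part (i)
    filter_upwards [hmem, hx', hv'] with t ht hxd hvd
    have hxs : Tendsto (slope x t) (𝓝[>] t) (𝓝 (x' t)) :=
      (hasDerivAt_iff_tendsto_slope.mp hxd).mono_left
        (nhdsWithin_mono t fun s hs => ne_of_gt hs)
    have hvs : Tendsto (slope v t) (𝓝[>] t) (𝓝 (v' t)) :=
      (hasDerivAt_iff_tendsto_slope.mp hvd).mono_left
        (nhdsWithin_mono t fun s hs => ne_of_gt hs)
    have htend : Tendsto (fun s => ⟪slope x t s, slope v t s⟫) (𝓝[>] t) (𝓝 ⟪x' t, v' t⟫) :=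
      hxs.inner hvs
    refine ge_of_tendsto htend ?_
    filter_upwards [self_mem_nhdsWithin] with s hs
    have hs0 : s ∈ Ici (0:ℝ) := mem_Ici.mpr (le_trans (mem_Ici.mp ht) (le_of_lt (mem_Ioi.mp hs)))
    have hinv : (0:ℝ) ≤ (s - t)⁻¹ := by
      have : (0:ℝ) < s - t := by simpa using sub_pos.mpr (mem_Ioi.mp hs)
      positivity
    rw [slope_def_module, slope_def_module, real_inner_smul_left, real_inner_smul_right]
    refine mul_nonneg hinv (mul_nonneg hinv ?_)
    rw [real_inner_comm]
    exact mono s hs0 t ht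
  · -- Part (ii)
    filter_upwards [hmem, hne0, hx', hv'] with t ht htne hxd hvd
    have htpos : (0:ℝ) < t := lt_of_le_of_ne ht (Ne.symm htne)
    have hxs : Tendsto (slope x t) (𝓝[≠] t) (𝓝 (x' t)) := hasDerivAt_iff_tendsto_slope.mp hxd
    -- eventually s > 0
    have hev : ∀ᶠ s in 𝓝[≠] t, (0:ℝ) < s :=
      eventually_nhdsWithin_of_eventually_nhds (eventually_gt_nhds htpos)
    -- continuity of v at t restricted
    have hvc : Tendsto (fun s => ‖v s - v t‖) (𝓝[≠] t) (𝓝 0) := by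
      have h1 : Tendsto v (𝓝[≠] t) (𝓝 (v t)) :=
        hvd.continuousAt.continuousWithinAt.tendsto
      have h2 : Tendsto (fun s => v s - v t) (𝓝[≠] t) (𝓝 (v t - v t)) :=
        h1.sub tendsto_const_nhds
      simpa using h2.norm
    -- the difference term
    set d : ℝ → ℝ := fun s => slope φ t s - ⟪v t, slope x t s⟫ with hddef
    have hg : Tendsto (fun s => ‖v s - v t‖ * ‖slope x t s‖) (𝓝[≠] t) (𝓝 0) := by
      have := hvc.mul hxs.norm
      simpa using this
    have hd0 : Tendsto d (𝓝[≠] t) (𝓝 0) := by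
      refine squeeze_zero_norm' ?_ hg
      filter_upwards [hev, self_mem_nhdsWithin] with s hs0 hsne
      have hsne' : s ≠ t := hsne
      have hs0' : s ∈ Ici (0:ℝ) := le_of_lt hs0
      have hstne : s - t ≠ 0 := sub_ne_zero.mpr hsne'
      have h1 : ⟪v t, x s - x t⟫ ≤ φ s - φ t := key s hs0' t ht
      have h2 : φ s - φ t ≤ ⟪v s, x s - x t⟫ := by
        have := key t ht s hs0'
        have e : x t - x s = -(x s - x t) := by abel
        rw [e, inner_neg_right] at this
        linarith
      have habs : |φ s - φ t - ⟪v t, x s - x t⟫| ≤ ‖v s - v t‖ * ‖x s - x t‖ := by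
        rw [abs_le]
        constructor
        · have := mul_nonneg (norm_nonneg (v s - v t)) (norm_nonneg (x s - x t))
          linarith
        · have hcs : ⟪v s - v t, x s - x t⟫ ≤ ‖v s - v t‖ * ‖x s - x t‖ :=
            real_inner_le_norm _ _
          rw [inner_sub_left] at hcs
          linarith
      have hds : d s = (s - t)⁻¹ * (φ s - φ t - ⟪v t, x s - x t⟫) := by
        simp only [hddef, slope_def_field, slope_def_module, real_inner_smul_right]
        field_simp
      have hns : ‖slope x t s‖ = |s - t|⁻¹ * ‖x s - x t‖ := by
        rw [slope_def_module, norm_smul, norm_inv, Real.norm_eq_abs]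
      rw [hds, hns, Real.norm_eq_abs, abs_mul, abs_inv]
      have hre : ‖v s - v t‖ * (|s - t|⁻¹ * ‖x s - x t‖)
          = |s - t|⁻¹ * (‖v s - v t‖ * ‖x s - x t‖) := by ring
      rw [hre]
      exact mul_le_mul_of_nonneg_left habs (by positivity)
    have h1 : Tendsto (fun s => ⟪v t, slope x t s⟫) (𝓝[≠] t) (𝓝 ⟪v t, x' t⟫) :=
      tendsto_const_nhds.inner hxs
    have hsum : Tendsto (slope φ t) (𝓝[≠] t) (𝓝 (⟪x' t, v t⟫)) := by
      have := hd0.add h1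
      have heq : (fun s => d s + ⟪v t, slope x t s⟫) = slope φ t := by
        funext s; simp [hddef]
      rw [heq] at this
      simpa [real_inner_comm] using this
    exact hasDerivAt_iff_tendsto_slope.mpr hsum

end
end

section
/- Let (x,v) be a strong global solution of the Levenberg–Marquardt dynamical system, z ∈ S and p ∈ N_{argmin Ψ}(z) with −p − ∇Θ(z) ∈ ∂Φ(z). Then the limit lim_{t→+∞} ( (λ(t)/2)‖x(t) − z‖² + g_z(t) ) exists and belongs to [0,+∞). -/
open MeasureTheory Filter Topology Set RealInnerProductSpace
open scoped ENNReal NNReal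

noncomputable section

variable {H : Type*} [NormedAddCommGroup H] [InnerProductSpace ℝ H] [CompleteSpace H]

lemma grad_ineq {f : H → ℝ} {f' : H → H} (hconv : ConvexOn ℝ Set.univ f)
    (hgrad : ∀ w, HasGradientAt f (f' w) w) (a y : H) :
    f a + ⟪f' a, y - a⟫ ≤ f y := by
  have hL : ∀ θ : ℝ, HasDerivAt (fun θ : ℝ => a + θ • (y - a)) (y - a) θ := by
    intro θ
    simpa using ((hasDerivAt_id θ).smul_const (y - a)).const_add a
  have hfa : HasFDerivAt f ((InnerProductSpace.toDual ℝ H) (f' a))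
      ((fun θ : ℝ => a + θ • (y - a)) 0) := by simpa using (hgrad a).hasFDerivAt
  have hF : HasDerivAt (fun θ : ℝ => f (a + θ • (y - a))) ⟪f' a, y - a⟫ 0 := by
    have := hfa.comp_hasDerivAt (0:ℝ) (hL 0)
    simp only [InnerProductSpace.toDual_apply_apply] at this
    exact this
  have hslope : Tendsto (fun θ : ℝ => θ⁻¹ * (f (a + θ • (y - a)) - f a))
      (𝓝[>] 0) (𝓝 ⟪f' a, y - a⟫) := by
    have h := hasDerivAt_iff_tendsto_slope.1 hF
    have h2 : Tendsto (slope (fun θ : ℝ => f (a + θ • (y - a))) 0) (𝓝[>] 0)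
        (𝓝 ⟪f' a, y - a⟫) := h.mono_left (nhdsWithin_mono _ (fun u hu => ne_of_gt hu))
    refine Tendsto.congr' ?_ h2
    filter_upwards [self_mem_nhdsWithin] with θ hθ
    rw [slope_def_field]
    simp [div_eq_inv_mul]
  have hbound : ∀ᶠ θ : ℝ in 𝓝[>] 0, θ⁻¹ * (f (a + θ • (y - a)) - f a) ≤ f y - f a := by
    filter_upwards [Ioc_mem_nhdsGT_of_mem (Set.left_mem_Ico.2 one_pos)] with θ hθ
    have hθ0 : 0 < θ := hθ.1
    have hθ1 : θ ≤ 1 := hθ.2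
    have hc := hconv.2 (Set.mem_univ a) (Set.mem_univ y)
      (show (0:ℝ) ≤ 1 - θ by linarith) hθ0.le (by ring)
    have harg : (1 - θ) • a + θ • y = a + θ • (y - a) := by
      rw [smul_sub]; module
    rw [harg] at hc
    simp only [smul_eq_mul] at hc
    rw [inv_mul_le_iff₀ hθ0]
    nlinarith
  linarith [le_of_tendsto hslope hbound]

lemma telescope_bound {ρ F : ℝ → ℝ} {b : ℝ}
    (hF : IntegrableOn F (Icc 0 b)) (hF0 : ∀ r ∈ Icc (0:ℝ) b, 0 ≤ F r)
    (hsmall : ∀ ε : ℝ, 0 < ε → ∃ δ : ℝ, 0 < δ ∧ ∀ s t : ℝ, 0 ≤ s → s ≤ t → t ≤ b → t - s ≤ δ →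
       ρ t - ρ s ≤ ε * ∫ r in s..t, F r)
    {s t : ℝ} (hs : 0 ≤ s) (hst : s ≤ t) (htb : t ≤ b) : ρ t ≤ ρ s := by
  have hFii : ∀ a c : ℝ, 0 ≤ a → a ≤ c → c ≤ b → IntervalIntegrable F volume a c := by
    intro a c ha hac hcb
    refine (hF.mono_set ?_).intervalIntegrable
    rw [Set.uIcc_of_le hac]
    exact Set.Icc_subset_Icc ha hcb
  have hkey : ∀ ε : ℝ, 0 < ε → ρ t - ρ s ≤ ε * ∫ r in s..t, F r := by
    intro ε hε
    obtain ⟨δ, hδ, hd⟩ := hsmall ε hε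
    obtain ⟨n, hn⟩ := exists_nat_ge ((t - s) / δ)
    have hn1 : 1 ≤ n + 1 := Nat.le_add_left 1 n
    set m : ℕ := n + 1 with hm
    have hm0 : (0:ℝ) < m := by positivity
    set h : ℝ := (t - s) / m with hh
    have hh0 : 0 ≤ h := by
      apply div_nonneg (by linarith) hm0.le
    have hhδ : h ≤ δ := by
      rw [hh, div_le_iff₀ hm0]
      have : (t - s) / δ ≤ m := by
        calc (t-s)/δ ≤ n := hn
        _ ≤ m := by exact_mod_cast Nat.le_succ n
      calc t - s = ((t-s)/δ) * δ := by field_simp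
      _ ≤ m * δ := by apply mul_le_mul_of_nonneg_right this hδ.le
      _ = δ * m := by ring
    set f : ℕ → ℝ := fun i => s + i * h with hf
    have hfmono : ∀ i j : ℕ, i ≤ j → f i ≤ f j := by
      intro i j hij
      simp only [hf]
      have : (i:ℝ) ≤ j := by exact_mod_cast hij
      nlinarith
    have hf0 : f 0 = s := by simp [hf]
    have hfm : f m = t := by
      simp only [hf, hh]
      field_simp
      ring
    have hfmem : ∀ i : ℕ, i ≤ m → f i ∈ Icc s t := by
      intro i hi
      constructor
      · rw [← hf0]; exact hfmono 0 i (Nat.zero_le i)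
      · rw [← hfm]; exact hfmono i m hi
    have hsum : ∑ i ∈ Finset.range m, (ρ (f (i+1)) - ρ (f i)) = ρ t - ρ s := by
      rw [Finset.sum_range_sub (fun i => ρ (f i))]
      rw [hf0, hfm]
    have hstep : ∀ i ∈ Finset.range m, ρ (f (i+1)) - ρ (f i) ≤ ε * ∫ r in (f i)..(f (i+1)), F r := by
      intro i hi
      have him : i + 1 ≤ m := Nat.succ_le_of_lt (Finset.mem_range.1 hi)
      have h1 := hfmem i (le_of_lt (Finset.mem_range.1 hi))
      have h2 := hfmem (i+1) him
      refine hd (f i) (f (i+1)) (hs.trans h1.1) (hfmono i (i+1) (Nat.le_succ i))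
        (h2.2.trans htb) ?_
      have : f (i+1) - f i = h := by simp [hf]; push_cast; ring
      rw [this]; exact hhδ
    have hadj : ∑ i ∈ Finset.range m, ∫ r in (f i)..(f (i+1)), F r = ∫ r in s..t, F r := by
      rw [← hf0, ← hfm]
      apply intervalIntegral.sum_integral_adjacent_intervals
      intro i hi
      have h1 := hfmem i (le_of_lt hi)
      have h2 := hfmem (i+1) (Nat.succ_le_of_lt hi)
      exact hFii _ _ (hs.trans h1.1) (hfmono i (i+1) (Nat.le_succ i)) (h2.2.trans htb)
    calc ρ t - ρ s = ∑ i ∈ Finset.range m, (ρ (f (i+1)) - ρ (f i)) := hsum.symm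
    _ ≤ ∑ i ∈ Finset.range m, ε * ∫ r in (f i)..(f (i+1)), F r := Finset.sum_le_sum hstep
    _ = ε * ∑ i ∈ Finset.range m, ∫ r in (f i)..(f (i+1)), F r := by rw [← Finset.mul_sum]
    _ = ε * ∫ r in s..t, F r := by rw [hadj]
  have hC : 0 ≤ ∫ r in s..t, F r := by
    apply intervalIntegral.integral_nonneg hst
    intro u hu
    exact hF0 u ⟨hs.trans hu.1, hu.2.trans htb⟩
  by_contra hcon
  push_neg at hcon
  set d := ρ t - ρ s with hd
  have hd0 : 0 < d := by simp [hd]; linarith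
  have := hkey (d / (2 * ((∫ r in s..t, F r) + 1))) (by positivity)
  have hlt : d / (2 * ((∫ r in s..t, F r) + 1)) * ∫ r in s..t, F r < d := by
    rw [div_mul_eq_mul_div, div_lt_iff₀ (by positivity)]
    nlinarith
  linarith

lemma deriv_eq_integrand {E : Type*} [NormedAddCommGroup E] [NormedSpace ℝ E] [CompleteSpace E]
    {g f : ℝ → E} {f' : ℝ → E} {b : ℝ}
    (hg : IntegrableOn g (Icc 0 b)) (hf : ∀ τ ∈ Icc (0:ℝ) b, f τ = f 0 + ∫ s in (0:ℝ)..τ, g s) :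
    ∀ᵐ τ ∂(volume.restrict (Ioo 0 b)), HasDerivAt f (f' τ) τ → f' τ = g τ := by
  set g' : ℝ → E := (Icc (0:ℝ) b).indicator g with hg'
  have hloc : LocallyIntegrable g' volume :=
    (MeasureTheory.IntegrableOn.integrable_indicator hg measurableSet_Icc).locallyIntegrable
  have hae := (IsUnifLocDoublingMeasure.vitaliFamily (volume : Measure ℝ) 1).ae_tendsto_average hloc
  rw [MeasureTheory.ae_restrict_iff' measurableSet_Ioo]
  filter_upwards [hae] with τ havg hτ hder
  -- average over Icc τ y tendsto g' τ as y → τ from the right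
  have h1 : Tendsto (fun y => ⨍ r in Icc τ y, g' r) (𝓝[>] τ) (𝓝 (g' τ)) :=
    havg.comp (Real.tendsto_Icc_vitaliFamily_right τ)
  -- slope tendsto f' τ
  have h2 : Tendsto (slope f τ) (𝓝[>] τ) (𝓝 (f' τ)) :=
    (hasDerivAt_iff_tendsto_slope.1 hder).mono_left
      (nhdsWithin_mono _ (fun u hu => ne_of_gt hu))
  -- slope equals average eventually on the right
  have h3 : (fun y => ⨍ r in Icc τ y, g' r) =ᶠ[𝓝[>] τ] slope f τ := by
    have hmem : Ioc τ b ∈ 𝓝[>] τ := Ioc_mem_nhdsGT_of_mem ⟨le_refl τ, hτ.2⟩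
    filter_upwards [hmem] with y hy
    have hτy : τ < y := hy.1
    have hyb : y ≤ b := hy.2
    have hIcc : Icc τ y ⊆ Icc 0 b := Icc_subset_Icc hτ.1.le hyb
    have hint : ∫ r in Icc τ y, g' r = ∫ r in τ..y, g r := by
      rw [MeasureTheory.setIntegral_indicator measurableSet_Icc]
      rw [Set.inter_eq_left.2 hIcc]
      rw [intervalIntegral.integral_of_le hτy.le,
        MeasureTheory.integral_Icc_eq_integral_Ioc]
    have hfy : f y - f τ = ∫ r in τ..y, g r := by
      rw [hf y ⟨hτ.1.le.trans hτy.le, hyb⟩, hf τ ⟨hτ.1.le, hτ.2.le⟩]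
      have h0y : IntervalIntegrable g volume 0 y := by
        refine (hg.mono_set ?_).intervalIntegrable
        rw [Set.uIcc_of_le (hτ.1.le.trans hτy.le)]
        exact Set.Icc_subset_Icc le_rfl hyb
      have h0τ : IntervalIntegrable g volume 0 τ := by
        refine (hg.mono_set ?_).intervalIntegrable
        rw [Set.uIcc_of_le hτ.1.le]
        exact Set.Icc_subset_Icc le_rfl hτ.2.le
      rw [← intervalIntegral.integral_interval_sub_left h0y h0τ]
      abel
    rw [MeasureTheory.setAverage_eq, hint, ← hfy, slope_def_module,
      Real.volume_real_Icc_of_le hτy.le]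
  have h4 : Tendsto (fun y => ⨍ r in Icc τ y, g' r) (𝓝[>] τ) (𝓝 (f' τ)) :=
    h2.congr' h3.symm
  have := tendsto_nhds_unique h4 h1
  rw [this, hg']
  exact Set.indicator_of_mem (Set.mem_Icc.2 ⟨hτ.1.le, hτ.2.le⟩) g

lemma inner_intervalIntegral_left {g : ℝ → H} {a c : ℝ} (hg : IntervalIntegrable g volume a c)
    (w : H) : ⟪∫ r in a..c, g r, w⟫ = ∫ r in a..c, ⟪g r, w⟫ :=
  (((innerSL ℝ (E := H)).flip w).intervalIntegral_comp_comm hg).symm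

lemma inner_intervalIntegral_right {g : ℝ → H} {a c : ℝ} (hg : IntervalIntegrable g volume a c)
    (w : H) : ⟪w, ∫ r in a..c, g r⟫ = ∫ r in a..c, ⟪w, g r⟫ :=
  ((innerSL ℝ (E := H) w).intervalIntegral_comp_comm hg).symm

lemma intervalIntegrable_inner_left {g : ℝ → H} {a c : ℝ}
    (hg : IntervalIntegrable g volume a c) (w : H) :
    IntervalIntegrable (fun r => ⟪g r, w⟫) volume a c :=
  ⟨((innerSL ℝ (E := H)).flip w).integrable_comp hg.1,
   ((innerSL ℝ (E := H)).flip w).integrable_comp hg.2⟩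

lemma intervalIntegrable_inner_right {g : ℝ → H} {a c : ℝ}
    (hg : IntervalIntegrable g volume a c) (w : H) :
    IntervalIntegrable (fun r => ⟪w, g r⟫) volume a c :=
  ⟨(innerSL ℝ (E := H) w).integrable_comp hg.1,
   (innerSL ℝ (E := H) w).integrable_comp hg.2⟩

set_option maxHeartbeats 2000000 in
theorem stmt_4
    (Φ : H → EReal) (Θ Ψ : H → ℝ) (Θ' Ψ' : H → H) (LΘ LΨ : ℝ≥0)
    (hΦprop : ProperFn Φ) (hΦconv : EConvexOn Φ) (hΦlsc : LowerSemicontinuous Φ)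
    (hΘconv : ConvexOn ℝ Set.univ Θ) (hΘgrad : ∀ w : H, HasGradientAt Θ (Θ' w) w)
    (hΘlip : LipschitzWith LΘ Θ')
    (hΨconv : ConvexOn ℝ Set.univ Ψ) (hΨgrad : ∀ w : H, HasGradientAt Ψ (Ψ' w) w)
    (hΨlip : LipschitzWith LΨ Ψ') (hΨnonneg : ∀ w : H, 0 ≤ Ψ w)
    (hargmin : (Ψ ⁻¹' {0} : Set H).Nonempty)
    (hS : (solSet Φ Θ Ψ).Nonempty)
    (lam lam' : ℝ → ℝ) (hlam_pos : ∀ t : ℝ, 0 ≤ t → 0 < lam t) (hlam_ac : LocAC lam)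
    (hlam' : ∀ᵐ t ∂(volume.restrict (Ici (0:ℝ))), HasDerivAt lam (lam' t) t)
    (hlam'_nonpos : ∀ᵐ t ∂(volume.restrict (Ici (0:ℝ))), lam' t ≤ 0)
    (β : ℝ → ℝ) (hβ_pos : ∀ t : ℝ, 0 ≤ t → 0 < β t) (hβ_meas : Measurable β)
    (hβ_bdd : ∀ b : ℝ, 0 < b → ∃ M : ℝ, ∀ t ∈ Icc (0:ℝ) b, β t ≤ M)
    (hH : CondH Ψ β) (hHt : CondHtilde Φ Θ Ψ Θ')
    (x v x' v' : ℝ → H) (hx_ac : LocAC x) (hv_ac : LocAC v)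
    (hx' : ∀ᵐ t ∂(volume.restrict (Ici (0:ℝ))), HasDerivAt x (x' t) t)
    (hv' : ∀ᵐ t ∂(volume.restrict (Ici (0:ℝ))), HasDerivAt v (v' t) t)
    (hvsub : ∀ t ∈ Ici (0:ℝ), v t ∈ subdiff Φ (x t))
    (hode : ∀ᵐ t ∂(volume.restrict (Ici (0:ℝ))), lam t • x' t + v' t + v t + Θ' (x t) + β t • Ψ' (x t) = 0)
    (z p : H) (hz : z ∈ solSet Φ Θ Ψ) (hp : p ∈ normalCone (Ψ ⁻¹' {0}) z)
    (hpz : -p - Θ' z ∈ subdiff Φ z)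
    :
    ∃ L : ℝ, 0 ≤ L ∧ Tendsto (fun t => lam t / 2 * ‖x t - z‖ ^ 2 + ((Φ z).toReal - (Φ (x t)).toReal + ⟪v t, x t - z⟫)) atTop (𝓝 L) := by
  have hzC : z ∈ Ψ ⁻¹' {0} := hz.1
  have hΨz : Ψ z = 0 := hzC
  have hΦz : Φ z = ((Φ z).toReal : EReal) := (EReal.coe_toReal hz.2.1 (hΦprop.2 z)).symm
  have hΦx : ∀ t ∈ Ici (0:ℝ), Φ (x t) = ((Φ (x t)).toReal : EReal) := fun t ht =>
    (EReal.coe_toReal (hvsub t ht).1 (hΦprop.2 (x t))).symm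
  -- real-valued subgradient inequalities
  have hereal : ∀ w y : H, ∀ q : H, ∀ a b : ℝ, Φ w = (a : EReal) → Φ y = (b : EReal) →
      (∀ y' : H, Φ w + (⟪q, y' - w⟫ : EReal) ≤ Φ y') → a + ⟪q, y - w⟫ ≤ b := by
    intro w y q a b hwa hyb hq
    have := hq y
    rw [hwa, hyb, ← EReal.coe_add] at this
    exact_mod_cast this
  have hsub : ∀ t ∈ Ici (0:ℝ), ∀ y : H, ∀ b : ℝ, Φ y = (b : EReal) →
      (Φ (x t)).toReal + ⟪v t, y - x t⟫ ≤ b := by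
    intro t ht y b hyb
    exact hereal (x t) y (v t) _ b (hΦx t ht) hyb (hvsub t ht).2
  have hsubz : ∀ y : H, ∀ b : ℝ, Φ y = (b : EReal) →
      (Φ z).toReal + ⟪-p - Θ' z, y - z⟫ ≤ b := by
    intro y b hyb
    exact hereal z y _ _ b hΦz hyb hpz.2
  set E : ℝ → ℝ := fun t => lam t / 2 * ‖x t - z‖ ^ 2 +
    ((Φ z).toReal - (Φ (x t)).toReal + ⟪v t, x t - z⟫) with hE
  have hE0 : ∀ t ∈ Ici (0:ℝ), 0 ≤ E t := by
    intro t ht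
    have h1 := hsub t ht z _ hΦz
    have h2 : ⟪v t, z - x t⟫ = -⟪v t, x t - z⟫ := by
      rw [← inner_neg_right]; congr 1; abel
    have h3 : 0 ≤ lam t / 2 * ‖x t - z‖ ^ 2 := by
      have := hlam_pos t ht
      positivity
    rw [h2] at h1
    simp only [hE]
    nlinarith
  set A : ℝ → ℝ≥0∞ := fun r => ENNReal.ofReal (β r) *
    erealToENNReal (fenchelConj Ψ ((β r)⁻¹ • p) - suppFn (Ψ ⁻¹' {0}) ((β r)⁻¹ • p)) with hA
  have hAfin : (∫⁻ r in Ici (0:ℝ), A r) < ⊤ := hH p ⟨z, hp⟩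
  have hfen : ∀ r : ℝ, 0 ≤ r → ∀ m : ℝ, m ≤ ⟪p, x r - z⟫ - β r * Ψ (x r) →
      ENNReal.ofReal m ≤ A r := by
    intro r hr m hm
    have hβr : 0 < β r := hβ_pos r hr
    set q : H := (β r)⁻¹ • p with hq
    have hpq : p = β r • q := by rw [hq, smul_inv_smul₀ hβr.ne']
    have hsupp : suppFn (Ψ ⁻¹' {0}) q = ((⟪q, z⟫ : ℝ) : EReal) := by
      apply le_antisymm
      · apply iSup₂_le
        intro w hw
        have h1 : ⟪p, w - z⟫ ≤ 0 := hp.2 w hw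
        have h2 : ⟪q, w⟫ ≤ ⟪q, z⟫ := by
          have h3 : ⟪q, w - z⟫ ≤ 0 := by
            rw [hq, real_inner_smul_left]
            exact mul_nonpos_of_nonneg_of_nonpos (inv_nonneg.2 hβr.le) h1
          rw [inner_sub_right] at h3
          linarith
        exact_mod_cast EReal.coe_le_coe_iff.2 h2
      · exact le_iSup₂ (f := fun w (_ : w ∈ Ψ ⁻¹' {0}) => ((⟪q, w⟫ : ℝ) : EReal)) z hzC
    have hfc_lb : ((⟪q, x r⟫ - Ψ (x r) : ℝ) : EReal) ≤ fenchelConj Ψ q :=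
      le_iSup (fun w : H => ((⟪q, w⟫ - Ψ w : ℝ) : EReal)) (x r)
    have hAr : A r = ENNReal.ofReal (β r) *
        erealToENNReal (fenchelConj Ψ q - suppFn (Ψ ⁻¹' {0}) q) := by
      simp only [hA, hq]
    by_cases htop : fenchelConj Ψ q = ⊤
    · rw [hAr, htop, hsupp, EReal.top_sub_coe]
      have h4 : erealToENNReal ⊤ = ⊤ := by simp [erealToENNReal]
      rw [h4, ENNReal.mul_top (by simp only [ne_eq, ENNReal.ofReal_eq_zero, not_le]; linarith)]
      exact le_top
    · have hbot : fenchelConj Ψ q ≠ ⊥ := by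
        intro h
        rw [h, le_bot_iff] at hfc_lb
        exact (EReal.coe_ne_bot _) hfc_lb
      set cr := (fenchelConj Ψ q).toReal with hcr
      have hfc : fenchelConj Ψ q = (cr : EReal) := (EReal.coe_toReal htop hbot).symm
      have hcle : ⟪q, x r⟫ - Ψ (x r) ≤ cr := by
        rw [hfc] at hfc_lb
        exact_mod_cast hfc_lb
      have hm2 : m ≤ β r * (cr - ⟪q, z⟫) := by
        have e1 : ⟪p, x r - z⟫ = β r * ⟪q, x r - z⟫ := by rw [hpq, real_inner_smul_left]
        have e2 : ⟪q, x r - z⟫ = ⟪q, x r⟫ - ⟪q, z⟫ := inner_sub_right q (x r) z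
        rw [e1, e2] at hm
        nlinarith
      calc ENNReal.ofReal m ≤ ENNReal.ofReal (β r * (cr - ⟪q, z⟫)) :=
            ENNReal.ofReal_le_ofReal hm2
      _ = A r := by
          rw [hAr, hfc, hsupp, ← EReal.coe_sub]
          have h5 : erealToENNReal ((cr - ⟪q, z⟫ : ℝ) : EReal) =
              ENNReal.ofReal (cr - ⟪q, z⟫) := by
            simp only [erealToENNReal]
            rw [if_neg (EReal.coe_ne_top _), EReal.toReal_coe]
          rw [h5, ENNReal.ofReal_mul hβr.le]
  have hmonoΘ : ∀ a b : H, 0 ≤ ⟪Θ' a - Θ' b, a - b⟫ := by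
    intro a b
    have h1 := grad_ineq hΘconv hΘgrad a b
    have h2 := grad_ineq hΘconv hΘgrad b a
    have e1 : ⟪Θ' a - Θ' b, a - b⟫ = ⟪Θ' a, a - b⟫ - ⟪Θ' b, a - b⟫ :=
      inner_sub_left (Θ' a) (Θ' b) (a - b)
    have e2 : ⟪Θ' a, b - a⟫ = -⟪Θ' a, a - b⟫ := by
      rw [← inner_neg_right]; congr 1; abel
    have e3 : ⟪Θ' b, a - b⟫ = -⟪Θ' b, b - a⟫ := by
      rw [← inner_neg_right]; congr 1; abel
    rw [e2] at h1
    rw [e1, e3]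
    linarith
  have hchain : ∀ r ∈ Ici (0:ℝ), ∀ xr' vr' : H,
      lam r • xr' + vr' + v r + Θ' (x r) + β r • Ψ' (x r) = 0 →
      ⟪lam r • xr' + vr', x r - z⟫ ≤ ⟪p, x r - z⟫ - β r * Ψ (x r) := by
    intro r hr xr' vr' heq
    have hode' : lam r • xr' + vr' = -(v r + Θ' (x r) + β r • Ψ' (x r)) := by
      apply eq_neg_of_add_eq_zero_left
      rw [← heq]; abel
    rw [hode']
    have hβr : 0 ≤ β r := (hβ_pos r hr).le
    have h1 := hsub r hr z _ hΦz
    have h2 := hsubz (x r) _ (hΦx r hr)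
    have a1 : ⟪v r, z - x r⟫ = -⟪v r, x r - z⟫ := by
      rw [← inner_neg_right]; congr 1; abel
    have a2 : ⟪-p - Θ' z, x r - z⟫ = -⟪p, x r - z⟫ - ⟪Θ' z, x r - z⟫ := by
      rw [sub_eq_add_neg (-p), inner_add_left, inner_neg_left, inner_neg_left]; ring
    rw [a1] at h1
    rw [a2] at h2
    have hm := hmonoΘ (x r) z
    have e1 : ⟪Θ' (x r) - Θ' z, x r - z⟫ = ⟪Θ' (x r), x r - z⟫ - ⟪Θ' z, x r - z⟫ :=
      inner_sub_left _ _ _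
    rw [e1] at hm
    have hψ := grad_ineq hΨconv hΨgrad (x r) z
    have a3 : ⟪Ψ' (x r), z - x r⟫ = -⟪Ψ' (x r), x r - z⟫ := by
      rw [← inner_neg_right]; congr 1; abel
    rw [a3, hΨz] at hψ
    have hψ2 : β r * Ψ (x r) ≤ β r * ⟪Ψ' (x r), x r - z⟫ :=
      mul_le_mul_of_nonneg_left (by linarith) hβr
    have egoal : ⟪-(v r + Θ' (x r) + β r • Ψ' (x r)), x r - z⟫ =
        -⟪v r, x r - z⟫ - ⟪Θ' (x r), x r - z⟫ - β r * ⟪Ψ' (x r), x r - z⟫ := by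
      rw [inner_neg_left, inner_add_left, inner_add_left, real_inner_smul_left]; ring
    rw [egoal]
    linarith
  set c : ℝ → ℝ := fun τ => (∫⁻ r in Ioc (0:ℝ) τ, A r).toReal with hc
  have hIocIci : ∀ s t : ℝ, 0 ≤ s → Ioc s t ⊆ Ici (0:ℝ) := fun s t hs r hr => hs.trans hr.1.le
  have hfin : ∀ s t : ℝ, 0 ≤ s → (∫⁻ r in Ioc s t, A r) ≠ ⊤ := by
    intro s t hs
    exact ne_top_of_le_ne_top hAfin.ne (lintegral_mono_set (hIocIci s t hs))
  have hcmono : Monotone c := by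
    intro a b hab
    simp only [hc]
    by_cases ha : (0:ℝ) ≤ a
    · exact ENNReal.toReal_mono (hfin 0 b le_rfl) (lintegral_mono_set (Ioc_subset_Ioc_right hab))
    · push_neg at ha
      have he : Ioc (0:ℝ) a = ∅ := Set.Ioc_eq_empty (by linarith)
      rw [he]
      simp only [Measure.restrict_empty, lintegral_zero_measure, ENNReal.toReal_zero]
      exact ENNReal.toReal_nonneg
  have hcbdd : ∀ τ : ℝ, c τ ≤ (∫⁻ r in Ici (0:ℝ), A r).toReal := by
    intro τ
    exact ENNReal.toReal_mono hAfin.ne (lintegral_mono_set (hIocIci 0 τ le_rfl))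
  have hcnonneg : ∀ τ : ℝ, 0 ≤ c τ := fun τ => ENNReal.toReal_nonneg
  have hcadd : ∀ s t : ℝ, 0 ≤ s → s ≤ t → c t = c s + (∫⁻ r in Ioc s t, A r).toReal := by
    intro s t hs hst
    simp only [hc]
    rw [← ENNReal.toReal_add (hfin 0 s le_rfl) (hfin s t hs)]
    congr 1
    rw [← lintegral_union measurableSet_Ioc (Set.Ioc_disjoint_Ioc_of_le le_rfl)]
    rw [Set.Ioc_union_Ioc_eq_Ioc hs hst]
  have key : ∀ s t : ℝ, 0 ≤ s → s ≤ t → E t ≤ E s + (c t - c s) := by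
    intro s t hs hst
    set b : ℝ := t + 1 with hb
    have hb0 : 0 < b := by linarith
    have htb : t ≤ b := by linarith
    obtain ⟨gx, hgxint, hgxrep⟩ := hx_ac b hb0
    obtain ⟨gv, hgvint, hgvrep⟩ := hv_ac b hb0
    obtain ⟨gl, hglint, hglrep⟩ := hlam_ac b hb0
    have hgxII : ∀ a d : ℝ, 0 ≤ a → a ≤ d → d ≤ b → IntervalIntegrable gx volume a d := by
      intro a d ha had hdb
      refine (hgxint.mono_set ?_).intervalIntegrable
      rw [Set.uIcc_of_le had]; exact Set.Icc_subset_Icc ha hdb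
    have hgvII : ∀ a d : ℝ, 0 ≤ a → a ≤ d → d ≤ b → IntervalIntegrable gv volume a d := by
      intro a d ha had hdb
      refine (hgvint.mono_set ?_).intervalIntegrable
      rw [Set.uIcc_of_le had]; exact Set.Icc_subset_Icc ha hdb
    have hglII : ∀ a d : ℝ, 0 ≤ a → a ≤ d → d ≤ b → IntervalIntegrable gl volume a d := by
      intro a d ha had hdb
      refine (hglint.mono_set ?_).intervalIntegrable
      rw [Set.uIcc_of_le had]; exact Set.Icc_subset_Icc ha hdb
    have hxinc : ∀ a d : ℝ, 0 ≤ a → a ≤ d → d ≤ b → x d - x a = ∫ r in a..d, gx r := by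
      intro a d ha had hdb
      rw [hgxrep d ⟨ha.trans had, hdb⟩, hgxrep a ⟨ha, had.trans hdb⟩,
        ← intervalIntegral.integral_interval_sub_left (hgxII 0 d (le_refl 0) (ha.trans had) hdb)
          (hgxII 0 a (le_refl 0) ha (had.trans hdb))]
      abel
    have hvinc : ∀ a d : ℝ, 0 ≤ a → a ≤ d → d ≤ b → v d - v a = ∫ r in a..d, gv r := by
      intro a d ha had hdb
      rw [hgvrep d ⟨ha.trans had, hdb⟩, hgvrep a ⟨ha, had.trans hdb⟩,
        ← intervalIntegral.integral_interval_sub_left (hgvII 0 d (le_refl 0) (ha.trans had) hdb)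
          (hgvII 0 a (le_refl 0) ha (had.trans hdb))]
      abel
    have hlinc : ∀ a d : ℝ, 0 ≤ a → a ≤ d → d ≤ b → lam d - lam a = ∫ r in a..d, gl r := by
      intro a d ha had hdb
      rw [hglrep d ⟨ha.trans had, hdb⟩, hglrep a ⟨ha, had.trans hdb⟩,
        ← intervalIntegral.integral_interval_sub_left (hglII 0 d (le_refl 0) (ha.trans had) hdb)
          (hglII 0 a (le_refl 0) ha (had.trans hdb))]
      abel
    -- continuity on [0,b]
    have huIcc : Set.uIcc (0:ℝ) b = Icc 0 b := Set.uIcc_of_le hb0.le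
    have hxcont : ContinuousOn x (Icc 0 b) := by
      refine ContinuousOn.congr (continuousOn_const.add ?_) hgxrep
      have := intervalIntegral.continuousOn_primitive_interval (huIcc ▸ hgxint)
      rwa [huIcc] at this
    have hvcont : ContinuousOn v (Icc 0 b) := by
      refine ContinuousOn.congr (continuousOn_const.add ?_) hgvrep
      have := intervalIntegral.continuousOn_primitive_interval (huIcc ▸ hgvint)
      rwa [huIcc] at this
    have hlcont : ContinuousOn lam (Icc 0 b) := by
      refine ContinuousOn.congr (continuousOn_const.add ?_) hglrep
      have := intervalIntegral.continuousOn_primitive_interval (huIcc ▸ hglint)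
      rwa [huIcc] at this
    -- bounds on [0,b]
    obtain ⟨Kx, hKx⟩ := isCompact_Icc.exists_bound_of_continuousOn
      (hxcont.sub (continuousOn_const (c := z)))
    obtain ⟨Kv, hKv⟩ := isCompact_Icc.exists_bound_of_continuousOn hvcont
    obtain ⟨Kl, hKl⟩ := isCompact_Icc.exists_bound_of_continuousOn hlcont
    set K : ℝ := max 1 (max Kx (max Kv Kl)) with hK
    have hK1 : (1:ℝ) ≤ K := le_max_left _ _
    have hK0 : (0:ℝ) < K := lt_of_lt_of_le one_pos hK1
    have hKxb : ∀ r ∈ Icc (0:ℝ) b, ‖x r - z‖ ≤ K := fun r hr =>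
      (hKx r hr).trans ((le_max_left _ _).trans (le_max_right _ _))
    have hKvb : ∀ r ∈ Icc (0:ℝ) b, ‖v r‖ ≤ K := fun r hr =>
      (hKv r hr).trans (((le_max_left _ _).trans (le_max_right _ _)).trans (le_max_right _ _))
    have hKlb : ∀ r ∈ Icc (0:ℝ) b, |lam r| ≤ K := fun r hr =>
      (hKl r hr).trans (((le_max_right _ _).trans (le_max_right _ _)).trans (le_max_right _ _))
    -- uniform continuity moduli
    have hucx := Metric.uniformContinuousOn_iff.1
      (isCompact_Icc.uniformContinuousOn_of_continuous hxcont)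
    have hucv := Metric.uniformContinuousOn_iff.1
      (isCompact_Icc.uniformContinuousOn_of_continuous hvcont)
    have hucl := Metric.uniformContinuousOn_iff.1
      (isCompact_Icc.uniformContinuousOn_of_continuous hlcont)
    -- integrands
    set F : ℝ → ℝ := fun r => |gl r| + ‖gx r‖ + ‖gv r‖ with hFdef
    have hFint : IntegrableOn F (Icc 0 b) := (hglint.abs.add hgxint.norm).add hgvint.norm
    have hF0 : ∀ r ∈ Icc (0:ℝ) b, 0 ≤ F r := by
      intro r _
      simp only [hFdef]
      positivity
    set qq : ℝ → ℝ := fun r => gl r * (‖x r - z‖ ^ 2 / 2) + lam r * ⟪gx r, x r - z⟫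
      + ⟪gv r, x r - z⟫ with hqqdef
    -- integrability of qq on [0,b]
    have hqqint : IntegrableOn qq (Icc 0 b) := by
      have hxm : AEStronglyMeasurable (fun r => x r - z) (volume.restrict (Icc 0 b)) :=
        (hxcont.sub (continuousOn_const (c := z))).aestronglyMeasurable measurableSet_Icc
      have hvm : AEStronglyMeasurable v (volume.restrict (Icc 0 b)) :=
        hvcont.aestronglyMeasurable measurableSet_Icc
      have hlm : AEStronglyMeasurable lam (volume.restrict (Icc 0 b)) :=
        hlcont.aestronglyMeasurable measurableSet_Icc
      have hgxm := hgxint.aestronglyMeasurable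
      have hgvm := hgvint.aestronglyMeasurable
      have hglm := hglint.aestronglyMeasurable
      have hqm : AEStronglyMeasurable qq (volume.restrict (Icc 0 b)) := by
        simp only [hqqdef, div_eq_mul_inv]
        exact ((hglm.mul ((hxm.norm.pow 2).mul aestronglyMeasurable_const)).add
          (hlm.mul (hgxm.inner hxm))).add (hgvm.inner hxm)
      refine Integrable.mono' (g := fun r => K ^ 2 * F r) ((hFint.const_mul _)) hqm ?_
      filter_upwards [ae_restrict_mem measurableSet_Icc] with r hr
      have n1 : ‖x r - z‖ ≤ K := hKxb r hr
      have n2 : |lam r| ≤ K := hKlb r hr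
      have i1 : |⟪gx r, x r - z⟫| ≤ ‖gx r‖ * ‖x r - z‖ := abs_real_inner_le_norm _ _
      have i2 : |⟪gv r, x r - z⟫| ≤ ‖gv r‖ * ‖x r - z‖ := abs_real_inner_le_norm _ _
      have hgx0 : (0:ℝ) ≤ ‖gx r‖ := norm_nonneg _
      have hgv0 : (0:ℝ) ≤ ‖gv r‖ := norm_nonneg _
      have hgl0 : (0:ℝ) ≤ |gl r| := abs_nonneg _
      have hx0 : (0:ℝ) ≤ ‖x r - z‖ := norm_nonneg _
      have habs : |qq r| ≤ |gl r| * (‖x r - z‖ ^ 2 / 2) + |lam r| * |⟪gx r, x r - z⟫|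
          + |⟪gv r, x r - z⟫| := by
        simp only [hqqdef]
        refine (abs_add_three _ _ _).trans ?_
        rw [abs_mul, abs_mul, abs_of_nonneg (by positivity : (0:ℝ) ≤ ‖x r - z‖ ^ 2 / 2)]
      have hsq1 : ‖x r - z‖ ^ 2 ≤ K ^ 2 := by
        have h := mul_le_mul n1 n1 hx0 hK0.le
        calc ‖x r - z‖ ^ 2 = ‖x r - z‖ * ‖x r - z‖ := sq (‖x r - z‖)
        _ ≤ K * K := h
        _ = K ^ 2 := (sq K).symm
      have t1 : |gl r| * (‖x r - z‖ ^ 2 / 2) ≤ |gl r| * K ^ 2 := by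
        apply mul_le_mul_of_nonneg_left _ hgl0
        linarith only [hsq1, sq_nonneg K]
      have t2 : |lam r| * |⟪gx r, x r - z⟫| ≤ K ^ 2 * ‖gx r‖ := by
        calc |lam r| * |⟪gx r, x r - z⟫| ≤ K * (‖gx r‖ * K) := by
              exact mul_le_mul n2 (i1.trans (mul_le_mul_of_nonneg_left n1 hgx0))
                (abs_nonneg _) hK0.le
        _ = K ^ 2 * ‖gx r‖ := by ring
      have t3 : |⟪gv r, x r - z⟫| ≤ K ^ 2 * ‖gv r‖ := by
        calc |⟪gv r, x r - z⟫| ≤ ‖gv r‖ * K := i2.trans (mul_le_mul_of_nonneg_left n1 hgv0)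
        _ = K * ‖gv r‖ := by ring
        _ ≤ K ^ 2 * ‖gv r‖ :=
            mul_le_mul_of_nonneg_right
              (by calc K = K * 1 := (mul_one K).symm
                  _ ≤ K * K := mul_le_mul_of_nonneg_left hK1 hK0.le
                  _ = K ^ 2 := (sq K).symm) hgv0
      rw [Real.norm_eq_abs]
      simp only [hFdef]
      calc |qq r| ≤ |gl r| * (‖x r - z‖ ^ 2 / 2) + |lam r| * |⟪gx r, x r - z⟫|
            + |⟪gv r, x r - z⟫| := habs
      _ ≤ |gl r| * K ^ 2 + K ^ 2 * ‖gx r‖ + K ^ 2 * ‖gv r‖ := by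
          linarith only [t1, t2, t3]
      _ = K ^ 2 * (|gl r| + ‖gx r‖ + ‖gv r‖) := by ring
    have hqqII : ∀ a d : ℝ, 0 ≤ a → a ≤ d → d ≤ b → IntervalIntegrable qq volume a d := by
      intro a d ha had hdb
      refine (hqqint.mono_set ?_).intervalIntegrable
      rw [Set.uIcc_of_le had]; exact Set.Icc_subset_Icc ha hdb
    have hFII : ∀ a d : ℝ, 0 ≤ a → a ≤ d → d ≤ b → IntervalIntegrable F volume a d := by
      intro a d ha had hdb
      refine (hFint.mono_set ?_).intervalIntegrable
      rw [Set.uIcc_of_le had]; exact Set.Icc_subset_Icc ha hdb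
    have hsq : ∀ a d : H, ⟪a - d, a + d⟫ = ‖a‖ ^ 2 - ‖d‖ ^ 2 := by
      intro a d
      rw [inner_sub_left, inner_add_right, inner_add_right, real_inner_comm d a]
      simp only [real_inner_self_eq_norm_sq]
      ring
    set ρ : ℝ → ℝ := fun τ => E τ - ∫ r in (0:ℝ)..τ, qq r with hρdef
    have hsmall : ∀ ε : ℝ, 0 < ε → ∃ δ : ℝ, 0 < δ ∧ ∀ s' t' : ℝ, 0 ≤ s' → s' ≤ t' → t' ≤ b →
        t' - s' ≤ δ → ρ t' - ρ s' ≤ ε * ∫ r in s'..t', F r := by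
      intro ε hε
      set ε₀ : ℝ := ε / (2 * K) with hε₀def
      have hε₀ : 0 < ε₀ := by positivity
      obtain ⟨δx, hδx, hdx⟩ := hucx ε₀ hε₀
      obtain ⟨δl, hδl, hdl⟩ := hucl ε₀ hε₀
      refine ⟨min δx δl / 2, by positivity, ?_⟩
      intro s' t' hs' hst' htb' hδ
      have hmem : ∀ r : ℝ, s' ≤ r → r ≤ t' → r ∈ Icc (0:ℝ) b :=
        fun r h1 h2 => ⟨hs'.trans h1, h2.trans htb'⟩
      have habsle : ∀ a d : ℝ, s' ≤ a → a ≤ t' → s' ≤ d → d ≤ t' → |a - d| ≤ t' - s' := by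
        intro a d h1 h2 h3 h4
        rw [abs_sub_le_iff]
        constructor <;> linarith only [h1, h2, h3, h4]
      have hmodx : ∀ a d : ℝ, s' ≤ a → a ≤ t' → s' ≤ d → d ≤ t' → ‖x a - x d‖ ≤ ε₀ := by
        intro a d h1 h2 h3 h4
        have hdist : dist a d < δx := by
          rw [Real.dist_eq]
          have := habsle a d h1 h2 h3 h4
          have hmin : min δx δl ≤ δx := min_le_left _ _
          linarith only [this, hmin, hδ, hδx, hδl]
        have := hdx a (hmem a h1 h2) d (hmem d h3 h4) hdist
        rw [dist_eq_norm] at this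
        exact this.le
      have hmodl : ∀ a d : ℝ, s' ≤ a → a ≤ t' → s' ≤ d → d ≤ t' → |lam a - lam d| ≤ ε₀ := by
        intro a d h1 h2 h3 h4
        have hdist : dist a d < δl := by
          rw [Real.dist_eq]
          have := habsle a d h1 h2 h3 h4
          have hmin : min δx δl ≤ δl := min_le_right _ _
          linarith only [this, hmin, hδ, hδx, hδl]
        have := hdl a (hmem a h1 h2) d (hmem d h3 h4) hdist
        rw [Real.dist_eq] at this
        exact this.le
      have h0t' : (0:ℝ) ≤ t' := hs'.trans hst'
      have e1 : lam t' - lam s' = ∫ r in s'..t', gl r := hlinc s' t' hs' hst' htb'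
      have e2 : x t' - x s' = ∫ r in s'..t', gx r := hxinc s' t' hs' hst' htb'
      have e3 : v t' - v s' = ∫ r in s'..t', gv r := hvinc s' t' hs' hst' htb'
      have i1 : ∫ r in s'..t', gl r * (‖x t' - z‖ ^ 2 / 2)
          = (lam t' - lam s') * (‖x t' - z‖ ^ 2 / 2) := by
        rw [intervalIntegral.integral_mul_const, ← e1]
      have i2 : ∫ r in s'..t', ⟪gx r, (lam s' / 2) • (x t' - z + (x s' - z))⟫
          = ⟪x t' - x s', (lam s' / 2) • (x t' - z + (x s' - z))⟫ := by
        rw [← inner_intervalIntegral_left (hgxII s' t' hs' hst' htb'), ← e2]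
      have i3 : ∫ r in s'..t', ⟪gv r, x t' - z⟫ = ⟪v t' - v s', x t' - z⟫ := by
        rw [← inner_intervalIntegral_left (hgvII s' t' hs' hst' htb'), ← e3]
      have hquad : lam t' / 2 * ‖x t' - z‖ ^ 2 - lam s' / 2 * ‖x s' - z‖ ^ 2
          = (lam t' - lam s') * (‖x t' - z‖ ^ 2 / 2)
            + ⟪x t' - x s', (lam s' / 2) • (x t' - z + (x s' - z))⟫ := by
        have hxx : x t' - x s' = (x t' - z) - (x s' - z) := by abel
        rw [hxx, real_inner_smul_right, hsq]
        ring
      have hGle : ((Φ z).toReal - (Φ (x t')).toReal + ⟪v t', x t' - z⟫)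
          - ((Φ z).toReal - (Φ (x s')).toReal + ⟪v s', x s' - z⟫)
          ≤ ⟪v t' - v s', x t' - z⟫ := by
        have h2a := hsub s' hs' (x t') _ (hΦx t' h0t')
        have h2b : ⟪v t', x t' - z⟫ - ⟪v s', x s' - z⟫
            = ⟪v t' - v s', x t' - z⟫ + ⟪v s', x t' - x s'⟫ := by
          have e : ⟪v s', x t' - x s'⟫ = ⟪v s', x t' - z⟫ - ⟪v s', x s' - z⟫ := by
            rw [← inner_sub_right]
            congr 1
            abel
          rw [e, inner_sub_left]
          ring
        linarith only [h2a, h2b]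
      have hint1 : IntervalIntegrable (fun r => gl r * (‖x t' - z‖ ^ 2 / 2)) volume s' t' :=
        (hglII s' t' hs' hst' htb').mul_const _
      have hint2 : IntervalIntegrable
          (fun r => ⟪gx r, (lam s' / 2) • (x t' - z + (x s' - z))⟫) volume s' t' :=
        intervalIntegrable_inner_left (hgxII s' t' hs' hst' htb') _
      have hint3 : IntervalIntegrable (fun r => ⟪gv r, x t' - z⟫) volume s' t' :=
        intervalIntegrable_inner_left (hgvII s' t' hs' hst' htb') _
      have hEineq : E t' - E s' ≤ ∫ r in s'..t', (gl r * (‖x t' - z‖ ^ 2 / 2)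
          + ⟪gx r, (lam s' / 2) • (x t' - z + (x s' - z))⟫ + ⟪gv r, x t' - z⟫) := by
        rw [intervalIntegral.integral_add (hint1.add hint2) hint3,
          intervalIntegral.integral_add hint1 hint2, i1, i2, i3]
        simp only [hE]
        linarith only [hquad, hGle]
      have hptw : ∀ r ∈ Icc s' t', (gl r * (‖x t' - z‖ ^ 2 / 2)
          + ⟪gx r, (lam s' / 2) • (x t' - z + (x s' - z))⟫ + ⟪gv r, x t' - z⟫) - qq r
          ≤ ε * F r := by
        intro r hr
        have hrs' : s' ≤ r := hr.1
        have hrt' : r ≤ t' := hr.2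
        have hm1 : ‖x t' - x r‖ ≤ ε₀ := hmodx t' r hst' le_rfl hrs' hrt'
        have hm2 : ‖x s' - x r‖ ≤ ε₀ := hmodx s' r le_rfl hst' hrs' hrt'
        have hm3 : |lam s' - lam r| ≤ ε₀ := hmodl s' r le_rfl hst' hrs' hrt'
        have hKr : ‖x r - z‖ ≤ K := hKxb r (hmem r hrs' hrt')
        have hKt : ‖x t' - z‖ ≤ K := hKxb t' (hmem t' hst' le_rfl)
        have hKs : ‖x s' - z‖ ≤ K := hKxb s' (hmem s' le_rfl hst')
        have hKls : |lam s'| ≤ K := hKlb s' (hmem s' le_rfl hst')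
        have d0 : (gl r * (‖x t' - z‖ ^ 2 / 2)
            + ⟪gx r, (lam s' / 2) • (x t' - z + (x s' - z))⟫ + ⟪gv r, x t' - z⟫) - qq r
            = gl r * ((‖x t' - z‖ ^ 2 - ‖x r - z‖ ^ 2) / 2)
              + ⟪gx r, (lam s' / 2) • (x t' - z + (x s' - z)) - lam r • (x r - z)⟫
              + ⟪gv r, (x t' - z) - (x r - z)⟫ := by
          simp only [hqqdef, inner_sub_right, real_inner_smul_right]
          ring
        have b1 : |‖x t' - z‖ ^ 2 - ‖x r - z‖ ^ 2| ≤ ε₀ * (2 * K) := by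
          calc |‖x t' - z‖ ^ 2 - ‖x r - z‖ ^ 2|
              = |⟪(x t' - z) - (x r - z), (x t' - z) + (x r - z)⟫| := by rw [hsq]
          _ ≤ ‖(x t' - z) - (x r - z)‖ * ‖(x t' - z) + (x r - z)‖ := abs_real_inner_le_norm _ _
          _ ≤ ε₀ * (2 * K) := by
              have hn1 : ‖(x t' - z) - (x r - z)‖ ≤ ε₀ := by
                rw [show (x t' - z) - (x r - z) = x t' - x r by abel]
                exact hm1
              have hn2 : ‖(x t' - z) + (x r - z)‖ ≤ 2 * K := by
                refine (norm_add_le _ _).trans ?_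
                linarith only [hKt, hKr]
              exact mul_le_mul hn1 hn2 (norm_nonneg _) hε₀.le
        have b2 : ‖(lam s' / 2) • (x t' - z + (x s' - z)) - lam r • (x r - z)‖ ≤ 2 * K * ε₀ := by
          have hdec : (lam s' / 2) • (x t' - z + (x s' - z)) - lam r • (x r - z)
              = (lam s' / 2) • (x t' - x r) + (lam s' / 2) • (x s' - x r)
                + (lam s' - lam r) • (x r - z) := by
            module
          rw [hdec]
          have n1 : ‖(lam s' / 2) • (x t' - x r)‖ ≤ (K / 2) * ε₀ := by
            rw [norm_smul, Real.norm_eq_abs, abs_div, abs_two]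
            exact mul_le_mul (by linarith only [hKls]) hm1 (norm_nonneg _)
              (by positivity)
          have n2 : ‖(lam s' / 2) • (x s' - x r)‖ ≤ (K / 2) * ε₀ := by
            rw [norm_smul, Real.norm_eq_abs, abs_div, abs_two]
            exact mul_le_mul (by linarith only [hKls]) hm2 (norm_nonneg _)
              (by positivity)
          have n3 : ‖(lam s' - lam r) • (x r - z)‖ ≤ ε₀ * K := by
            rw [norm_smul, Real.norm_eq_abs]
            exact mul_le_mul hm3 hKr (norm_nonneg _) hε₀.le
          calc ‖(lam s' / 2) • (x t' - x r) + (lam s' / 2) • (x s' - x r)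
              + (lam s' - lam r) • (x r - z)‖
              ≤ ‖(lam s' / 2) • (x t' - x r) + (lam s' / 2) • (x s' - x r)‖
                + ‖(lam s' - lam r) • (x r - z)‖ := norm_add_le _ _
          _ ≤ (‖(lam s' / 2) • (x t' - x r)‖ + ‖(lam s' / 2) • (x s' - x r)‖)
                + ‖(lam s' - lam r) • (x r - z)‖ := by
              have := norm_add_le ((lam s' / 2) • (x t' - x r)) ((lam s' / 2) • (x s' - x r))
              linarith only [this]
          _ ≤ 2 * K * ε₀ := by linarith only [n1, n2, n3]
        have b3 : ‖(x t' - z) - (x r - z)‖ ≤ ε₀ := by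
          rw [show (x t' - z) - (x r - z) = x t' - x r by abel]
          exact hm1
        rw [d0]
        have c1 : gl r * ((‖x t' - z‖ ^ 2 - ‖x r - z‖ ^ 2) / 2) ≤ |gl r| * (ε₀ * K) := by
          calc gl r * ((‖x t' - z‖ ^ 2 - ‖x r - z‖ ^ 2) / 2)
              ≤ |gl r * ((‖x t' - z‖ ^ 2 - ‖x r - z‖ ^ 2) / 2)| := le_abs_self _
          _ = |gl r| * (|‖x t' - z‖ ^ 2 - ‖x r - z‖ ^ 2| / 2) := by
              rw [abs_mul, abs_div, abs_two]
          _ ≤ |gl r| * (ε₀ * K) := by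
              apply mul_le_mul_of_nonneg_left _ (abs_nonneg _)
              linarith only [b1]
        have c2 : ⟪gx r, (lam s' / 2) • (x t' - z + (x s' - z)) - lam r • (x r - z)⟫
            ≤ ‖gx r‖ * (2 * K * ε₀) := by
          refine (real_inner_le_norm _ _).trans ?_
          exact mul_le_mul_of_nonneg_left b2 (norm_nonneg _)
        have c3 : ⟪gv r, (x t' - z) - (x r - z)⟫ ≤ ‖gv r‖ * ε₀ := by
          refine (real_inner_le_norm _ _).trans ?_
          exact mul_le_mul_of_nonneg_left b3 (norm_nonneg _)
        have hεeq : 2 * K * ε₀ = ε := by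
          rw [hε₀def]
          field_simp
        have hFr : F r = |gl r| + ‖gx r‖ + ‖gv r‖ := rfl
        rw [hFr]
        have hgl0 : (0:ℝ) ≤ |gl r| := abs_nonneg _
        have hgv0 : (0:ℝ) ≤ ‖gv r‖ := norm_nonneg _
        have hgx0 : (0:ℝ) ≤ ‖gx r‖ := norm_nonneg _
        have f1 : |gl r| * (ε₀ * K) ≤ ε * |gl r| := by
          have he2 : ε₀ * K = ε / 2 := by
            rw [hε₀def]
            field_simp
          rw [he2, mul_comm]
          exact mul_le_mul_of_nonneg_right (by linarith only [hε]) hgl0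
        have f2 : ‖gx r‖ * (2 * K * ε₀) = ε * ‖gx r‖ := by
          rw [hεeq]; ring
        have f3 : ‖gv r‖ * ε₀ ≤ ε * ‖gv r‖ := by
          have he3 : ε₀ ≤ ε := by
            calc ε₀ = 1 * ε₀ := (one_mul ε₀).symm
            _ ≤ (2 * K) * ε₀ := mul_le_mul_of_nonneg_right (by linarith only [hK1]) hε₀.le
            _ = ε := hεeq
          rw [mul_comm]
          exact mul_le_mul_of_nonneg_right he3 hgv0
        calc gl r * ((‖x t' - z‖ ^ 2 - ‖x r - z‖ ^ 2) / 2)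
              + ⟪gx r, (lam s' / 2) • (x t' - z + (x s' - z)) - lam r • (x r - z)⟫
              + ⟪gv r, (x t' - z) - (x r - z)⟫
            ≤ |gl r| * (ε₀ * K) + ‖gx r‖ * (2 * K * ε₀) + ‖gv r‖ * ε₀ := by
              linarith only [c1, c2, c3]
        _ ≤ ε * |gl r| + ε * ‖gx r‖ + ε * ‖gv r‖ := by linarith only [f1, f2, f3]
        _ = ε * (|gl r| + ‖gx r‖ + ‖gv r‖) := by ring
      have hρsplit : ρ t' - ρ s' = E t' - E s' - ∫ r in s'..t', qq r := by
        simp only [hρdef]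
        rw [← intervalIntegral.integral_interval_sub_left
          (hqqII 0 t' le_rfl h0t' htb') (hqqII 0 s' le_rfl hs' (hst'.trans htb'))]
        ring
      rw [hρsplit]
      have hqqII' := hqqII s' t' hs' hst' htb'
      have hPII := (hint1.add hint2).add hint3
      have hFII' := hFII s' t' hs' hst' htb'
      calc E t' - E s' - ∫ r in s'..t', qq r
          ≤ (∫ r in s'..t', (gl r * (‖x t' - z‖ ^ 2 / 2)
            + ⟪gx r, (lam s' / 2) • (x t' - z + (x s' - z))⟫ + ⟪gv r, x t' - z⟫))
            - ∫ r in s'..t', qq r := by linarith only [hEineq]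
      _ = ∫ r in s'..t', ((gl r * (‖x t' - z‖ ^ 2 / 2)
            + ⟪gx r, (lam s' / 2) • (x t' - z + (x s' - z))⟫ + ⟪gv r, x t' - z⟫) - qq r) :=
          (intervalIntegral.integral_sub hPII hqqII').symm
      _ ≤ ∫ r in s'..t', ε * F r :=
          intervalIntegral.integral_mono_on hst' (hPII.sub hqqII') (hFII'.const_mul ε) hptw
      _ = ε * ∫ r in s'..t', F r := intervalIntegral.integral_const_mul ε F
    have hρle : ρ t ≤ ρ s := telescope_bound hFint hF0 hsmall hs hst htb
    have hEle : E t ≤ E s + ∫ r in s..t, qq r := by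
      have h9 : ρ t - ρ s ≤ 0 := by linarith only [hρle]
      simp only [hρdef] at h9
      have hsplit := intervalIntegral.integral_interval_sub_left
        (hqqII 0 t le_rfl (hs.trans hst) htb) (hqqII 0 s le_rfl hs (hst.trans htb))
      rw [← hsplit]
      linarith only [h9]
    have hIoc_sub_Icc : Ioc s t ⊆ Icc 0 b := fun r hr => ⟨hs.trans hr.1.le, hr.2.trans htb⟩
    have hIoc_sub_Ioo : Ioc s t ⊆ Ioo 0 b :=
      fun r hr => ⟨lt_of_le_of_lt hs hr.1, lt_of_le_of_lt hr.2 (by rw [hb]; exact lt_add_one t)⟩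
    have hIoc_sub_Ici : Ioc s t ⊆ Ici (0:ℝ) := fun r hr => hs.trans hr.1.le
    have hqqIoc : IntegrableOn qq (Ioc s t) := hqqint.mono_set hIoc_sub_Icc
    have hmono1 : volume.restrict (Ioc s t) ≤ volume.restrict (Ici (0:ℝ)) :=
      Measure.restrict_mono hIoc_sub_Ici le_rfl
    have hmono2 : volume.restrict (Ioc s t) ≤ volume.restrict (Ioo (0:ℝ) b) :=
      Measure.restrict_mono hIoc_sub_Ioo le_rfl
    have hidx := deriv_eq_integrand (f' := x') hgxint hgxrep
    have hidv := deriv_eq_integrand (f' := v') hgvint hgvrep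
    have hidl := deriv_eq_integrand (f' := lam') hglint hglrep
    have haeIoc : ∀ᵐ r ∂(volume.restrict (Ioc s t)), ENNReal.ofReal (qq r) ≤ A r := by
      filter_upwards [hx'.filter_mono (ae_mono hmono1), hv'.filter_mono (ae_mono hmono1),
        hlam'.filter_mono (ae_mono hmono1), hlam'_nonpos.filter_mono (ae_mono hmono1),
        hode.filter_mono (ae_mono hmono1), hidx.filter_mono (ae_mono hmono2),
        hidv.filter_mono (ae_mono hmono2), hidl.filter_mono (ae_mono hmono2),
        ae_restrict_mem measurableSet_Ioc]
        with r hdx hdv hdl hl0 hoder hix hiv hil hr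
      have hr0 : (0:ℝ) ≤ r := hs.trans hr.1.le
      have hgx_eq : x' r = gx r := hix hdx
      have hgv_eq : v' r = gv r := hiv hdv
      have hgl_eq : lam' r = gl r := hil hdl
      have hexp : ⟪lam r • x' r + v' r, x r - z⟫
          = lam r * ⟪x' r, x r - z⟫ + ⟪v' r, x r - z⟫ := by
        rw [inner_add_left, real_inner_smul_left]
      have hle1 : qq r ≤ ⟪lam r • x' r + v' r, x r - z⟫ := by
        rw [hexp]
        have h1 : qq r = gl r * (‖x r - z‖ ^ 2 / 2) + lam r * ⟪gx r, x r - z⟫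
            + ⟪gv r, x r - z⟫ := rfl
        rw [h1, ← hgx_eq, ← hgv_eq, ← hgl_eq]
        have hnn : (0:ℝ) ≤ ‖x r - z‖ ^ 2 / 2 := by positivity
        have hneg : lam' r * (‖x r - z‖ ^ 2 / 2) ≤ 0 := mul_nonpos_of_nonpos_of_nonneg hl0 hnn
        linarith only [hneg]
      have hle2 := hchain r hr0 (x' r) (v' r) hoder
      exact hfen r hr0 (qq r) (hle1.trans hle2)
    have hint_le : ∫ r in s..t, qq r ≤ (∫⁻ r in Ioc s t, A r).toReal := by
      rw [intervalIntegral.integral_of_le hst,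
        integral_eq_lintegral_pos_part_sub_lintegral_neg_part hqqIoc]
      have hmono3 : (∫⁻ r in Ioc s t, ENNReal.ofReal (qq r)) ≤ ∫⁻ r in Ioc s t, A r :=
        lintegral_mono_ae haeIoc
      have h10 := ENNReal.toReal_mono (hfin s t hs) hmono3
      have h11 : (0:ℝ) ≤ (∫⁻ r in Ioc s t, ENNReal.ofReal (-qq r)).toReal :=
        ENNReal.toReal_nonneg
      linarith only [h10, h11]
    have hcdiff : c t - c s = (∫⁻ r in Ioc s t, A r).toReal := by
      rw [hcadd s t hs hst]
      ring
    rw [hcdiff]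
    linarith only [hEle, hint_le]
  -- limit assembly
  set Ffun : ℝ → ℝ := fun τ => E (max τ 0) - c (max τ 0) with hFf
  set cm : ℝ → ℝ := fun τ => c (max τ 0) with hcm
  have hanti : Antitone Ffun := by
    intro a b hab
    have h1 : (0:ℝ) ≤ max a 0 := le_max_right _ _
    have h2 : max a 0 ≤ max b 0 := max_le_max hab le_rfl
    have := key (max a 0) (max b 0) h1 h2
    simp only [hFf]
    linarith
  have hbdd : BddBelow (Set.range Ffun) := by
    refine ⟨-(∫⁻ r in Ici (0:ℝ), A r).toReal, ?_⟩
    rintro _ ⟨τ, rfl⟩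
    have h1 := hE0 (max τ 0) (Set.mem_Ici.2 (le_max_right _ _))
    have h2 := hcbdd (max τ 0)
    simp only [hFf]
    linarith
  have hFl := tendsto_atTop_ciInf hanti hbdd
  have hcmono2 : Monotone cm := fun a b hab => hcmono (max_le_max hab le_rfl)
  have hcbdd2 : BddAbove (Set.range cm) := by
    refine ⟨(∫⁻ r in Ici (0:ℝ), A r).toReal, ?_⟩
    rintro _ ⟨τ, rfl⟩
    exact hcbdd (max τ 0)
  have hcl := tendsto_atTop_ciSup hcmono2 hcbdd2
  refine ⟨(⨅ τ, Ffun τ) + ⨆ τ, cm τ, ?_, ?_⟩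
  · have hT : Tendsto (fun τ => Ffun τ + cm τ) atTop (𝓝 ((⨅ τ, Ffun τ) + ⨆ τ, cm τ)) :=
      hFl.add hcl
    have hEv : ∀ᶠ τ in (atTop : Filter ℝ), 0 ≤ E τ := by
      filter_upwards [eventually_ge_atTop (0:ℝ)] with τ hτ using hE0 τ hτ
    have hEq : (fun τ => Ffun τ + cm τ) =ᶠ[atTop] E := by
      filter_upwards [eventually_ge_atTop (0:ℝ)] with τ hτ
      simp only [hFf, hcm, max_eq_left hτ]
      ring
    have hTE : Tendsto E atTop (𝓝 ((⨅ τ, Ffun τ) + ⨆ τ, cm τ)) := hT.congr' hEq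
    exact ge_of_tendsto hTE hEv
  · have hEq : (fun τ => Ffun τ + cm τ) =ᶠ[atTop] E := by
      filter_upwards [eventually_ge_atTop (0:ℝ)] with τ hτ
      simp only [hFf, hcm, max_eq_left hτ]
      ring
    exact (hFl.add hcl).congr' hEq

end
end
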